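/- arXiv:2304.03723 — 12 statements merged into one kernel-verified Lean document; each statement's English description precedes it below -/
import Mathlib

section
/- Let D be an integral domain with quotient field K, and let {D_i} be a collection of local overrings of D with D = ⋂ D_i. Suppose there exists a valuation overring V of D (a valuation subring of K containing D) that contains every D_i and dominates every D_i (i.e., the maximal ideal of each D_i is contained in the maximal ideal of V). Then D is local. -/
/-!
A nonzero nonunit `c` of `D` has `c⁻¹ ∉ D = ⋂ Dᵢ`, so `c` is a nonunit of some `Dᵢ` and hence,
by domination, of `V`. Thus the inclusion `D → V` is a local homomorphism, and a ring admitting a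
local homomorphism into a local ring is local.
-/

namespace Subring

variable {K : Type*} [Field K]

theorem isUnit_mk_iff {A : Subring K} {x : K} (hx : x ∈ A) :
    IsUnit (⟨x, hx⟩ : A) ↔ x ≠ 0 ∧ x⁻¹ ∈ A := by
  constructor
  · intro h
    refine ⟨by rintro rfl; exact not_isUnit_zero h, ?_⟩
    obtain ⟨y, hy⟩ := h.exists_right_inv
    rw [inv_eq_of_mul_eq_one_right (congrArg Subtype.val hy)]
    exact y.2
  · rintro ⟨hx0, hinv⟩
    exact IsUnit.of_mul_eq_one ⟨x⁻¹, hinv⟩ (Subtype.ext (mul_inv_cancel₀ hx0))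

theorem isLocalHom_inclusion_of_iInf_eq {ι : Type*} {D V : Subring K} (Di : ι → Subring K)
    (hint : ⨅ i, Di i = D) (hDV : D ≤ V) (hVi : ∀ i, Di i ≤ V)
    (hloc : ∀ i, IsLocalHom (inclusion (hVi i))) : IsLocalHom (inclusion hDV) := by
  refine ⟨fun ⟨c, hc⟩ hu => ?_⟩
  obtain ⟨hc0, hcV⟩ := (isUnit_mk_iff _).mp hu
  refine (isUnit_mk_iff hc).mpr ⟨hc0, ?_⟩
  by_contra hcD
  rw [← hint, mem_iInf, not_forall] at hcD
  obtain ⟨i, hi⟩ := hcD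
  have hci : c ∈ Di i := mem_iInf.mp (hint ▸ hc) i
  exact hi ((isUnit_mk_iff hci).mp
    ((hloc i).map_nonunit ⟨c, hci⟩ ((isUnit_mk_iff _).mpr ⟨hc0, hcV⟩))).2

end Subring

theorem intersection_of_dominated_local_overrings_isLocalRing_general
    {K : Type*} [Field K] (D : Subring K)
    {ι : Type*} (Di : ι → Subring K)
    (hint : (⨅ i, Di i) = D)
    (V : ValuationSubring K) (hDV : D ≤ V.toSubring)
    (hVi : ∀ i, Di i ≤ V.toSubring)
    (hdom : ∀ i, ∀ x : K, (hx : x ∈ Di i) → ¬ IsUnit (⟨x, hx⟩ : Di i) →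
      ¬ IsUnit (⟨x, hVi i hx⟩ : V.toSubring)) :
    IsLocalRing D := by
  have : IsLocalRing V.toSubring := inferInstanceAs (IsLocalRing V)
  have : IsLocalHom (Subring.inclusion hDV) :=
    Subring.isLocalHom_inclusion_of_iInf_eq Di hint hDV hVi
      fun i => ⟨fun ⟨x, hx⟩ => not_imp_not.mp (hdom i x hx)⟩
  exact (Subring.inclusion hDV).domain_isLocalRing

/-- **Lemma (intersection of dominated local overrings is local).**
Let `D` be an integral domain with quotient field `K` and let `{Dᵢ}` be a collection of
local overrings of `D` (subrings of `K` containing `D`) with `D = ⋂ᵢ Dᵢ`.  If there is a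
valuation overring `V` of `D` containing every `Dᵢ` and dominating every `Dᵢ` (every
nonunit of `Dᵢ` is a nonunit of `V`), then `D` is local. -/
theorem intersection_of_dominated_local_overrings_isLocalRing
    {K : Type*} [Field K] (D : Subring K) (hfrac : IsFractionRing D K)
    {ι : Type*} (Di : ι → Subring K)
    (hover : ∀ i, D ≤ Di i) (hloc : ∀ i, IsLocalRing (Di i))
    (hint : (⨅ i, Di i) = D)
    (V : ValuationSubring K) (hDV : D ≤ V.toSubring)
    (hVi : ∀ i, Di i ≤ V.toSubring)
    (hdom : ∀ i, ∀ x : K, (hx : x ∈ Di i) → ¬ IsUnit (⟨x, hx⟩ : Di i) →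
      ¬ IsUnit (⟨x, hVi i hx⟩ : V.toSubring)) :
    IsLocalRing D :=
  intersection_of_dominated_local_overrings_isLocalRing_general D Di hint V hDV hVi hdom
end

section
/- Let D be an integral domain with quotient field K, and let {D_i} be a collection of local overrings of D with D = ⋂ D_i. Suppose there is a valuation overring V containing all D_i which dominates all of them except possibly one ring D_1. Then D is local: the sum of any two non-units of D lies in the maximal ideal of D_1 intersected with D. -/
/-!
A nonunit `x` of `D = ⋂ Dᵢ` stays a nonunit of `D_{i₀}`: otherwise `x⁻¹ ∈ D_{i₀} ⊆ V`, so `x` is a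
unit of `V`, and domination forces `x` to be a unit of every other `Dᵢ` as well, hence of `D`.
So the inclusion `D → D_{i₀}` is a local homomorphism into a local ring, which makes `D` local
and sends the sum of two nonunits to a nonunit.
-/

namespace Subring

variable {K : Type*} [Field K] {ι : Type*}

theorem isUnit_of_forall_isUnit_inclusion_iInf_le [Nonempty ι] {Di : ι → Subring K}
    {a : ↥(⨅ i, Di i)} (ha : ∀ i, IsUnit (inclusion (iInf_le Di i) a)) : IsUnit a := by
  obtain ⟨i⟩ := ‹Nonempty ι›
  rw [Submonoid.isUnit_iff_and]
  exact ⟨(Submonoid.isUnit_iff_and.1 (ha i)).1,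
    mem_iInf.2 fun j => (Submonoid.isUnit_iff_and.1 (ha j)).2⟩

theorem isLocalHom_inclusion_iInf_le {Di : ι → Subring K} (i₀ : ι) {V : Subring K}
    (hVi : ∀ i, Di i ≤ V) (hdom : ∀ i, i ≠ i₀ → IsLocalHom (inclusion (hVi i))) :
    IsLocalHom (inclusion (iInf_le Di i₀)) := by
  have : Nonempty ι := ⟨i₀⟩
  refine ⟨fun a ha => isUnit_of_forall_isUnit_inclusion_iInf_le fun i => ?_⟩
  by_cases hi : i = i₀
  · subst hi
    exact ha
  · have := hdom i hi
    have haV : IsUnit (inclusion (hVi i₀) (inclusion (iInf_le Di i₀) a)) := ha.map _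
    exact isUnit_of_map_unit (inclusion (hVi i)) _ haV

end Subring

theorem intersection_local_overrings_one_exception_isLocalRing_general
    {K : Type*} [Field K] (D : Subring K)
    {ι : Type*} (Di : ι → Subring K) (i₀ : ι)
    (hloc : ∀ i, IsLocalRing (Di i))
    (hint : (⨅ i, Di i) = D)
    (V : ValuationSubring K)
    (hVi : ∀ i, Di i ≤ V.toSubring)
    (hdom : ∀ i, i ≠ i₀ → ∀ x : K, (hx : x ∈ Di i) → ¬ IsUnit (⟨x, hx⟩ : Di i) →
      ¬ IsUnit (⟨x, hVi i hx⟩ : V.toSubring)) :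
    IsLocalRing D ∧
      ∀ x y : K, (hx : x ∈ D) → (hy : y ∈ D) →
        ¬ IsUnit (⟨x, hx⟩ : D) → ¬ IsUnit (⟨y, hy⟩ : D) →
        ∃ hxy : x + y ∈ Di i₀, ¬ IsUnit (⟨x + y, hxy⟩ : Di i₀) := by
  subst hint
  have := hloc i₀
  have hdomV : ∀ i, i ≠ i₀ → IsLocalHom (Subring.inclusion (hVi i)) := fun i hi =>
    ⟨fun a ha => by_contra fun h => hdom i hi a a.2 h ha⟩
  have := Subring.isLocalHom_inclusion_iInf_le i₀ hVi hdomV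
  have : IsLocalRing ↥(⨅ i, Di i) := (Subring.inclusion (iInf_le Di i₀)).domain_isLocalRing
  refine ⟨inferInstance, fun x y hx hy hxu hyu => ⟨iInf_le Di i₀ (add_mem hx hy), fun h => ?_⟩⟩
  exact IsLocalRing.nonunits_add hxu hyu (isUnit_of_map_unit (Subring.inclusion _) _ h)

/-- **Lemma 4.3 (intersection of local overrings, all but one dominated).**
Let `D` be an integral domain with quotient field `K` and `{Dᵢ}` a collection of local
overrings with `D = ⋂ᵢ Dᵢ`.  Suppose a valuation overring `V` contains all the `Dᵢ` and
dominates all of them except possibly one ring `D_{i₀}`.  Then `D` is local, and the sum of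
any two nonunits of `D` lies in the maximal ideal of `D_{i₀}` intersected with `D` (i.e. it
is a nonunit of `D_{i₀}` belonging to `D`). -/
theorem intersection_local_overrings_one_exception_isLocalRing
    {K : Type*} [Field K] (D : Subring K) (hfrac : IsFractionRing D K)
    {ι : Type*} (Di : ι → Subring K) (i₀ : ι)
    (hover : ∀ i, D ≤ Di i) (hloc : ∀ i, IsLocalRing (Di i))
    (hint : (⨅ i, Di i) = D)
    (V : ValuationSubring K)
    (hVi : ∀ i, Di i ≤ V.toSubring)
    (hdom : ∀ i, i ≠ i₀ → ∀ x : K, (hx : x ∈ Di i) → ¬ IsUnit (⟨x, hx⟩ : Di i) →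
      ¬ IsUnit (⟨x, hVi i hx⟩ : V.toSubring)) :
    IsLocalRing D ∧
      ∀ x y : K, (hx : x ∈ D) → (hy : y ∈ D) →
        ¬ IsUnit (⟨x, hx⟩ : D) → ¬ IsUnit (⟨y, hy⟩ : D) →
        ∃ hxy : x + y ∈ Di i₀, ¬ IsUnit (⟨x + y, hxy⟩ : Di i₀) :=
  intersection_local_overrings_one_exception_isLocalRing_general D Di i₀ hloc hint V hVi hdom
end

section
/- Let D be an integral domain with quotient field K and let A be a local overring of D. Let R be a subring with D(t) ⊆ R ⊆ A(t), where t is an indeterminate and B(t) denotes the Nagata ring of B. Let p = m_{A(t)} ∩ R be the contraction of the maximal ideal of A(t), and suppose A ⊆ R_p. Then R_p = A(t). -/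
open Polynomial
variable {K : Type*} [Field K]

/-- A polynomial has *unit content* if its coefficients generate the unit ideal. -/
def UnitContent {R : Type*} [CommRing R] (p : Polynomial R) : Prop :=
  Ideal.span (Set.range p.coeff) = ⊤

theorem unitContent_one {R : Type*} [CommRing R] : UnitContent (1 : Polynomial R) := by
  rw [UnitContent, Ideal.eq_top_iff_one]
  exact Ideal.subset_span ⟨0, by simp⟩

theorem unitContent_mul {R : Type*} [CommRing R] [Nontrivial R] {p q : Polynomial R}
    (hp : UnitContent p) (hq : UnitContent q) : UnitContent (p * q) := by
  by_contra h
  obtain ⟨m, hm, hle⟩ := Ideal.exists_le_maximal _ ((Ideal.ne_top_iff_one _).mpr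
    (fun h1 => h (by rwa [UnitContent, Ideal.eq_top_iff_one])))
  have key : ∀ r : Polynomial R, UnitContent r →
      Polynomial.map (Ideal.Quotient.mk m) r ≠ 0 := by
    intro r hr hr0
    have : Set.range r.coeff ⊆ (m : Set R) := by
      rintro _ ⟨n, rfl⟩
      have := congrArg (fun s => Polynomial.coeff s n) hr0
      simp only [Polynomial.coeff_map, Polynomial.coeff_zero] at this
      exact Ideal.Quotient.eq_zero_iff_mem.mp this
    have : Ideal.span (Set.range r.coeff) ≤ m := Ideal.span_le.mpr this
    rw [hr] at this
    exact hm.ne_top (top_le_iff.mp this)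
  have h0 : Polynomial.map (Ideal.Quotient.mk m) (p * q) ≠ 0 := by
    rw [Polynomial.map_mul]
    exact mul_ne_zero (key p hp) (key q hq)
  obtain ⟨n, hn⟩ : ∃ n, (Polynomial.map (Ideal.Quotient.mk m) (p * q)).coeff n ≠ 0 := by
    by_contra hc
    push_neg at hc
    exact h0 (Polynomial.ext fun n => by simpa using hc n)
  rw [Polynomial.coeff_map] at hn
  exact hn (Ideal.Quotient.eq_zero_iff_mem.mpr
    (hle (Ideal.subset_span ⟨n, rfl⟩)))

/-- The natural map from polynomials over a subring `B ⊆ K` to `RatFunc K`. -/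
noncomputable def nagataHom (B : Subring K) : Polynomial B →+* RatFunc K :=
  (algebraMap (Polynomial K) (RatFunc K)).comp (Polynomial.mapRingHom B.subtype)

theorem nagataHom_injective (B : Subring K) : Function.Injective (nagataHom B) :=
  (RatFunc.algebraMap_injective K).comp
    (Polynomial.map_injective _ B.subtype_injective)

theorem nagataHom_ne_zero {B : Subring K} {q : Polynomial B} (hq : UnitContent q) :
    nagataHom B q ≠ 0 := by
  intro h0
  have : q = 0 := nagataHom_injective B (by simpa using h0)
  subst this
  rw [UnitContent] at hq
  have : Set.range (0 : Polynomial B).coeff = {0} := by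
    ext x; simp [eq_comm]
  rw [this] at hq
  simp at hq

/-- The Nagata ring `B(t)` of a subring `B` of a field `K`, realized as a subring of the
rational function field `RatFunc K`: the set of fractions `f/g` of polynomials with
coefficients in `B` such that the content of `g` is the unit ideal of `B`. -/
noncomputable def Subring.nagata (B : Subring K) : Subring (RatFunc K) where
  carrier := { x | ∃ p q : Polynomial B, UnitContent q ∧ x = nagataHom B p / nagataHom B q }
  zero_mem' := ⟨0, 1, unitContent_one, by simp⟩
  one_mem' := ⟨1, 1, unitContent_one, by simp⟩
  add_mem' := by
    rintro x y ⟨p, q, hq, rfl⟩ ⟨p', q', hq', rfl⟩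
    refine ⟨p * q' + p' * q, q * q', unitContent_mul hq hq', ?_⟩
    rw [div_add_div _ _ (nagataHom_ne_zero hq) (nagataHom_ne_zero hq'),
      (nagataHom B).map_add, (nagataHom B).map_mul, (nagataHom B).map_mul,
      (nagataHom B).map_mul]
    ring
  neg_mem' := by
    rintro x ⟨p, q, hq, rfl⟩
    exact ⟨-p, q, hq, by rw [(nagataHom B).map_neg, neg_div]⟩
  mul_mem' := by
    rintro x y ⟨p, q, hq, rfl⟩ ⟨p', q', hq', rfl⟩
    exact ⟨p * p', q * q', unitContent_mul hq hq', by rw [(nagataHom B).map_mul,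
      (nagataHom B).map_mul, div_mul_div_comm]⟩

/-- **Lemma 5.3 (localizing between Nagata rings).**
Let `D` be an integral domain with quotient field `K` and `A` a local overring of `D`.
Let `R` be a ring with `D(t) ⊆ R ⊆ A(t)` (where `B(t)` denotes the Nagata ring of `B`,
realized inside the rational function field `RatFunc K`), and let `p = m_{A(t)} ∩ R` be the
contraction to `R` of the maximal ideal of the local ring `A(t)`; thus `s ∉ p` precisely
when `s` becomes a unit in `A(t)`.  If `A ⊆ R_p`, then `R_p = A(t)`, where
`R_p = { a/s : a ∈ R, s ∈ R \ p }` inside `RatFunc K`. -/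
theorem localization_eq_nagata_of_le
    (D A : Subring K) [IsLocalRing A] (hDA : D ≤ A)
    (R : Subring (RatFunc K)) (h1 : D.nagata ≤ R) (h2 : R ≤ A.nagata)
    (hARp : ∀ b : K, b ∈ A → RatFunc.C b ∈
      {x : RatFunc K | ∃ a s : R, IsUnit (Subring.inclusion h2 s) ∧ x = (a : RatFunc K) / (s : RatFunc K)}) :
    {x : RatFunc K | ∃ a s : R, IsUnit (Subring.inclusion h2 s) ∧ x = (a : RatFunc K) / (s : RatFunc K)}
      = (A.nagata : Set (RatFunc K)) := by
  set S : Set (RatFunc K) :=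
    {x : RatFunc K | ∃ a s : R, IsUnit (Subring.inclusion h2 s) ∧
      x = (a : RatFunc K) / (s : RatFunc K)} with hSdef
  -- a unit denominator is nonzero
  have hs_ne : ∀ {s : R}, IsUnit (Subring.inclusion h2 s) → (s : RatFunc K) ≠ 0 := by
    intro s hs h0
    exact hs.ne_zero (Subtype.ext h0)
  -- R ⊆ S
  have hR : ∀ r : R, (r : RatFunc K) ∈ S := fun r =>
    ⟨r, 1, by rw [map_one]; exact isUnit_one, by simp⟩
  -- S is closed under multiplication
  have hmulS : ∀ x ∈ S, ∀ y ∈ S, x * y ∈ S := by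
    rintro x ⟨a, s, hs, rfl⟩ y ⟨a', s', hs', rfl⟩
    refine ⟨a * a', s * s', by rw [map_mul]; exact hs.mul hs', ?_⟩
    push_cast
    rw [div_mul_div_comm]
  -- S is closed under addition
  have haddS : ∀ x ∈ S, ∀ y ∈ S, x + y ∈ S := by
    rintro x ⟨a, s, hs, rfl⟩ y ⟨a', s', hs', rfl⟩
    refine ⟨a * s' + a' * s, s * s', by rw [map_mul]; exact hs.mul hs', ?_⟩
    push_cast
    rw [div_add_div _ _ (hs_ne hs) (hs_ne hs')]
    ring_nf
  -- X is in S
  have hX : nagataHom A (Polynomial.X) ∈ S := by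
    have hXD : nagataHom A (Polynomial.X) ∈ D.nagata := by
      refine ⟨Polynomial.X, 1, unitContent_one, ?_⟩
      simp [nagataHom]
    simpa using hR ⟨_, h1 hXD⟩
  -- constants from A are in S
  have hC : ∀ a : A, nagataHom A (Polynomial.C a) ∈ S := by
    intro a
    have : nagataHom A (Polynomial.C a) = RatFunc.C (a : K) := by
      simp [nagataHom]
    rw [this]
    exact hARp a a.2
  -- every polynomial over A lands in S
  have hpoly : ∀ f : Polynomial A, nagataHom A f ∈ S := by
    intro f
    induction f using Polynomial.induction_on with
    | C a => exact hC a
    | add p q hp hq => rw [(nagataHom A).map_add]; exact haddS _ hp _ hq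
    | monomial n a ih =>
        rw [pow_succ, ← mul_assoc, (nagataHom A).map_mul]
        exact hmulS _ ih _ hX
  -- polynomials land in A.nagata
  have hmem : ∀ f : Polynomial A, nagataHom A f ∈ A.nagata := fun f =>
    ⟨f, 1, unitContent_one, by simp⟩
  -- unit-content polynomials give units of A.nagata
  have hunit : ∀ q : Polynomial A, UnitContent q →
      IsUnit (⟨nagataHom A q, hmem q⟩ : A.nagata) := by
    intro q hq
    refine isUnit_iff_exists_inv.mpr ⟨⟨(nagataHom A q)⁻¹, ⟨1, q, hq, by simp⟩⟩, ?_⟩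
    exact Subtype.ext (mul_inv_cancel₀ (nagataHom_ne_zero hq))
  -- inverses of units of A.nagata lying in S are in S
  have hinvS : ∀ x ∈ S, ∀ hx : x ∈ A.nagata, IsUnit (⟨x, hx⟩ : A.nagata) → x⁻¹ ∈ S := by
    rintro x ⟨a, s, hs, rfl⟩ hx hu
    refine ⟨s, a, ?_, by rw [inv_div]⟩
    have ha : Subring.inclusion h2 a =
        (⟨(a : RatFunc K) / (s : RatFunc K), hx⟩ : A.nagata) * Subring.inclusion h2 s := by
      apply Subtype.ext
      show (a : RatFunc K) = (a : RatFunc K) / (s : RatFunc K) * (s : RatFunc K)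
      rw [div_mul_cancel₀ _ (hs_ne hs)]
    rw [ha]
    exact hu.mul hs
  ext x
  constructor
  · rintro ⟨a, s, hs, rfl⟩
    obtain ⟨u, hu⟩ := hs
    have hcoe : ((u : A.nagata) : RatFunc K) = (s : RatFunc K) := by rw [hu]; rfl
    have hmul1 : (s : RatFunc K) * (((u⁻¹ : (A.nagata)ˣ) : A.nagata) : RatFunc K) = 1 := by
      rw [← hcoe]
      exact_mod_cast congrArg (fun z : A.nagata => (z : RatFunc K)) u.mul_inv
    have hinv : ((s : RatFunc K))⁻¹ = (((u⁻¹ : (A.nagata)ˣ) : A.nagata) : RatFunc K) :=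
      inv_eq_of_mul_eq_one_right hmul1
    show (a : RatFunc K) / (s : RatFunc K) ∈ A.nagata
    rw [div_eq_mul_inv, hinv]
    exact Subring.mul_mem _ (h2 a.2) ((u⁻¹ : (A.nagata)ˣ) : A.nagata).2
  · rintro ⟨p, q, hq, rfl⟩
    rw [div_eq_mul_inv]
    exact hmulS _ (hpoly p) _ (hinvS _ (hpoly q) (hmem q) (hunit q hq))
end

section
/- Let D be a local integral domain and {D_i}_{i∈Λ} a family of overrings with D = ⋂_i D_i. If there exists z in the quotient field of D such that z ∉ D and z⁻¹ ∉ D, but for every i either z ∈ D_i or z⁻¹ ∈ D_i, then the rational function 1/(t+z) lies in ⋂_i D_i(t) but not in D(t); in particular D(t) ≠ ⋂_i D_i(t). -/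
open Polynomial
variable {K : Type*} [Field K]

theorem nagataHom_X (B : Subring K) : nagataHom B X = RatFunc.X := by
  simp [nagataHom]

theorem nagataHom_C (B : Subring K) (a : B) : nagataHom B (C a) = RatFunc.C (a : K) := by
  simp [nagataHom]

theorem nagataHom_apply (B : Subring K) (p : Polynomial B) :
    nagataHom B p = algebraMap (Polynomial K) (RatFunc K) (p.map B.subtype) := rfl

theorem key_nonunit (D : Subring K) [IsLocalRing D]
    {z : K} (hz : z ∉ D) (hz' : z⁻¹ ∉ D) (a : D) (h : z * (a : K) ∈ D) :
    a ∈ IsLocalRing.maximalIdeal D ∧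
      (⟨z * (a : K), h⟩ : D) ∈ IsLocalRing.maximalIdeal D := by
  constructor
  · rw [IsLocalRing.mem_maximalIdeal, mem_nonunits_iff]
    intro hu
    obtain ⟨b, hb⟩ := isUnit_iff_exists_inv.mp hu
    apply hz
    have hb' : (a : K) * (b : K) = 1 := by
      have := congrArg Subtype.val hb
      push_cast at this
      exact this
    have : z = (z * (a : K)) * (b : K) := by rw [mul_assoc, hb', mul_one]
    rw [this]
    exact D.mul_mem h b.2
  · rw [IsLocalRing.mem_maximalIdeal, mem_nonunits_iff]
    intro hu
    obtain ⟨b, hb⟩ := isUnit_iff_exists_inv.mp hu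
    apply hz'
    have hb' : (z * (a : K)) * (b : K) = 1 := by
      have := congrArg Subtype.val hb
      push_cast at this
      exact this
    have : z⁻¹ = (a : K) * (b : K) :=
      inv_eq_of_mul_eq_one_right (by rw [← mul_assoc]; exact hb')
    rw [this]
    exact D.mul_mem a.2 b.2

/-- **Proposition 4.9 (Nagata extension does not commute with intersection).**
Let `D` be a local integral domain with quotient field `K` and `{Dᵢ}` a defining family of
overrings (`D = ⋂ᵢ Dᵢ`).  If there is `z ∈ K` with `z ∉ D` and `z⁻¹ ∉ D` such that for
every `i` either `z ∈ Dᵢ` or `z⁻¹ ∈ Dᵢ`, then the rational function `1/(t + z)` lies in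
`⋂ᵢ Dᵢ(t)` but not in `D(t)`; in particular `D(t) ≠ ⋂ᵢ Dᵢ(t)`. -/
theorem one_div_t_add_z_mem_inter_nagata_not_mem_nagata
    (D : Subring K) [IsLocalRing D]
    {ι : Type*} (Di : ι → Subring K) (hover : ∀ i, D ≤ Di i)
    (hint : (⨅ i, Di i) = D)
    (z : K) (hz : z ∉ D) (hz' : z⁻¹ ∉ D)
    (hzi : ∀ i, z ∈ Di i ∨ z⁻¹ ∈ Di i) :
    (1 / (RatFunc.X + RatFunc.C z) ∈ ⨅ i, (Di i).nagata) ∧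
      1 / (RatFunc.X + RatFunc.C z) ∉ D.nagata ∧
      D.nagata ≠ ⨅ i, (Di i).nagata := by
  have hz0 : z ≠ 0 := fun h0 => hz (h0 ▸ D.zero_mem)
  have hpoly : (X + C z : Polynomial K) ≠ 0 := fun h0 => by
    have := congrArg (fun p => Polynomial.coeff p 1) h0
    simp at this
  have hw0 : (RatFunc.X + RatFunc.C z : RatFunc K) ≠ 0 := by
    rw [← RatFunc.algebraMap_X, ← RatFunc.algebraMap_C, ← map_add]
    exact RatFunc.algebraMap_ne_zero hpoly
  have hmem : ∀ B : Subring K, (z ∈ B ∨ z⁻¹ ∈ B) →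
      1 / (RatFunc.X + RatFunc.C z) ∈ B.nagata := by
    rintro B (hB | hB)
    · refine ⟨1, X + C ⟨z, hB⟩, ?_, ?_⟩
      · rw [UnitContent, Ideal.eq_top_iff_one]
        exact Ideal.subset_span ⟨1, by simp⟩
      · rw [(nagataHom _).map_one, (nagataHom _).map_add, nagataHom_X, nagataHom_C]
    · have hC0 : (RatFunc.C z⁻¹ : RatFunc K) ≠ 0 := by
        simpa using inv_ne_zero hz0
      refine ⟨C ⟨z⁻¹, hB⟩, C ⟨z⁻¹, hB⟩ * X + 1, ?_, ?_⟩
      · rw [UnitContent, Ideal.eq_top_iff_one]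
        refine Ideal.subset_span ⟨0, ?_⟩
        simp [coeff_C_mul]
      · rw [(nagataHom _).map_add, (nagataHom _).map_mul, (nagataHom _).map_one,
          nagataHom_X, nagataHom_C]
        have hden : RatFunc.C z⁻¹ * RatFunc.X + 1 = RatFunc.C z⁻¹ * (RatFunc.X + RatFunc.C z) := by
          rw [mul_add, ← map_mul, inv_mul_cancel₀ hz0, map_one]
        rw [hden, div_mul_eq_div_div, div_self hC0]
  have hnot : 1 / (RatFunc.X + RatFunc.C z) ∉ D.nagata := by
    rintro ⟨p, q, hq, heq⟩
    have hQ := nagataHom_ne_zero hq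
    rw [div_eq_div_iff hw0 hQ, one_mul] at heq
    have key : q.map D.subtype = p.map D.subtype * (X + C z) := by
      apply RatFunc.algebraMap_injective K
      rw [map_mul, map_add, RatFunc.algebraMap_X, RatFunc.algebraMap_C, ← nagataHom_apply,
        ← nagataHom_apply, heq]
    have hc0 : ((q.coeff 0 : D) : K) = ((p.coeff 0 : D) : K) * z := by
      have h := congrArg (fun r => Polynomial.coeff r 0) key
      simp only [Polynomial.coeff_map, mul_add, Polynomial.coeff_add, Polynomial.coeff_mul_C,
        Polynomial.mul_coeff_zero, Polynomial.coeff_X_zero, Polynomial.coeff_C_zero,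
        mul_zero, zero_add] at h
      exact h
    have hcs : ∀ m, ((q.coeff (m + 1) : D) : K) =
        ((p.coeff m : D) : K) + ((p.coeff (m + 1) : D) : K) * z := by
      intro m
      have h := congrArg (fun r => Polynomial.coeff r (m + 1)) key
      simp only [Polynomial.coeff_map, mul_add, Polynomial.coeff_add, Polynomial.coeff_mul_C,
        Polynomial.coeff_mul_X] at h
      exact h
    have hzmem : ∀ n, z * ((p.coeff n : D) : K) ∈ D := by
      intro n
      cases n with
      | zero =>
        have h : z * ((p.coeff 0 : D) : K) = ((q.coeff 0 : D) : K) := by rw [hc0]; ring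
        rw [h]
        exact (q.coeff 0).2
      | succ m =>
        have h : z * ((p.coeff (m + 1) : D) : K) =
            ((q.coeff (m + 1) : D) : K) - ((p.coeff m : D) : K) := by rw [hcs m]; ring
        rw [h]
        exact D.sub_mem (q.coeff (m + 1)).2 (p.coeff m).2
    have hqm : ∀ n, q.coeff n ∈ IsLocalRing.maximalIdeal D := by
      intro n
      cases n with
      | zero =>
        have heq0 : q.coeff 0 = (⟨z * ((p.coeff 0 : D) : K), hzmem 0⟩ : D) := by
          apply Subtype.ext
          show ((q.coeff 0 : D) : K) = z * ((p.coeff 0 : D) : K)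
          rw [hc0]; ring
        rw [heq0]
        exact (key_nonunit D hz hz' (p.coeff 0) (hzmem 0)).2
      | succ m =>
        have heq1 : q.coeff (m + 1) =
            p.coeff m + (⟨z * ((p.coeff (m + 1) : D) : K), hzmem (m + 1)⟩ : D) := by
          apply Subtype.ext
          show ((q.coeff (m + 1) : D) : K) = ((p.coeff m : D) : K) + z * ((p.coeff (m + 1) : D) : K)
          rw [hcs m]; ring
        rw [heq1]
        exact Ideal.add_mem _ (key_nonunit D hz hz' (p.coeff m) (hzmem m)).1
          (key_nonunit D hz hz' (p.coeff (m + 1)) (hzmem (m + 1))).2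
    have hle : Ideal.span (Set.range q.coeff) ≤ IsLocalRing.maximalIdeal D :=
      Ideal.span_le.mpr (by rintro _ ⟨n, rfl⟩; exact hqm n)
    rw [hq] at hle
    exact (IsLocalRing.maximalIdeal.isMaximal D).ne_top (top_le_iff.mp hle)
  refine ⟨Subring.mem_iInf.mpr fun i => hmem (Di i) (hzi i), hnot, fun hEq => hnot ?_⟩
  rw [hEq]
  exact Subring.mem_iInf.mpr fun i => hmem (Di i) (hzi i)
end

section
/- Let V be a valuation domain and A a semilocal domain with the same quotient field as A ∩ V, and suppose every residue field of A ∩ V has at least s+1 elements where s is the number of maximal ideals of A. If A ∩ V is local, then A is local, the maximal ideal m_A of A is a prime ideal of A ∩ V, A equals the localization of A ∩ V at m_A, and the quotient (A ∩ V)/m_A is a valuation domain with quotient field A/m_A. -/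
/-!
Every element of `A` can be shifted by an element of `A ∩ V` to a unit of `A`: otherwise `s + 1`
lifts of distinct residues of `A ∩ V` give `s + 1` nonunits of `A`, two of which lie in a common
maximal ideal, although their difference is a unit of `A ∩ V`. If `a ∈ A \ V` and `w = a + u` is
such a unit, then `w⁻¹` lies in the maximal ideal of `A ∩ V`, so `a = w (1 - u w⁻¹)` is a unit of
`A`. Thus the nonunits of `A` lie in the local ring `A ∩ V`, which makes `A` local. Then
`P = m_A ∩ (A ∩ V)`, and `A = (A ∩ V)_P` because every `a ∈ A \ V` is `1 / a⁻¹` with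
`a⁻¹ ∈ (A ∩ V) \ P`.
-/

open IsLocalRing Cardinal

universe u

theorem IsLocalRing.exists_isUnit_add_map_of_mk_maximalSpectrum_lt {R A : Type u} [CommRing R]
    [IsLocalRing R] [CommRing A] (f : R →+* A)
    (hcard : #(MaximalSpectrum A) < #(ResidueField R)) (a : A) :
    ∃ r : R, IsUnit (a + f r) := by
  by_contra! hnonunit
  let lift : ResidueField R → R := Function.surjInv residue_surjective
  choose M hM hmem using fun x => exists_max_ideal_of_mem_nonunits (hnonunit (lift x))
  let toMax : ResidueField R → MaximalSpectrum A := fun x => ⟨M x, hM x⟩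
  obtain ⟨x, y, hxy, hne⟩ := Function.not_injective_iff.mp fun hinj : toMax.Injective =>
    hcard.not_ge (mk_le_of_injective hinj)
  have hMxy : M x = M y := congrArg MaximalSpectrum.asIdeal hxy
  have hunit : IsUnit (f (lift x - lift y)) := by
    refine ((residue_ne_zero_iff_isUnit _).mp ?_).map f
    simpa [lift, Function.surjInv_eq, sub_eq_zero] using hne
  have hmem' : f (lift x - lift y) ∈ M x := by
    rw [map_sub, ← add_sub_add_left_eq_sub _ _ a]
    exact (M x).sub_mem (hmem x) (hMxy ▸ hmem y)
  exact (hM x).ne_top (Ideal.eq_top_of_isUnit_mem _ hmem' hunit)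

namespace Subring

variable {K : Type*} [Field K] {A : Subring K} {V : ValuationSubring K}

theorem isUnit_of_notMem_valuationSubring [IsLocalRing ↥(A ⊓ V.toSubring)]
    (hshift : ∀ a : A, ∃ r : ↥(A ⊓ V.toSubring), IsUnit (a + inclusion inf_le_left r))
    {a : A} (haV : (a : K) ∉ V) : IsUnit a := by
  obtain ⟨u, hw⟩ := hshift a
  set w := a + inclusion inf_le_left u
  have hwV : (w : K) ∉ V := fun h => haV (by simpa [w] using V.sub_mem h (mem_inf.mp u.2).2)
  obtain ⟨hw0, hwA⟩ := Submonoid.isUnit_iff_and.mp hw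
  let b : ↥(A ⊓ V.toSubring) :=
    ⟨(w : K)⁻¹, mem_inf.mpr ⟨hwA, (V.mem_or_inv_mem _).resolve_left hwV⟩⟩
  have hb : b ∈ maximalIdeal _ := fun hbu =>
    hwV (by simpa [b] using (mem_inf.mp (Submonoid.isUnit_iff_and.mp hbu).2).2)
  have hunit : IsUnit (inclusion inf_le_left (1 - u * b)) :=
    (isUnit_one_sub_self_of_mem_nonunits _ (Ideal.mul_mem_left _ u hb)).map _
  convert hw.mul hunit using 1
  ext
  change (a : K) = ((a : K) + u) * (1 - u * ((a : K) + u)⁻¹)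
  have hw0 : (a : K) + u ≠ 0 := hw0
  field_simp
  ring

theorem isLocalRing_of_isUnit_of_notMem_valuationSubring [IsLocalRing ↥(A ⊓ V.toSubring)]
    (hunit : ∀ a : A, (a : K) ∉ V → IsUnit a) : IsLocalRing A := by
  refine IsLocalRing.of_isUnit_or_isUnit_one_sub_self fun a => ?_
  by_cases haV : (a : K) ∈ V
  · let a' : ↥(A ⊓ V.toSubring) := ⟨a, mem_inf.mpr ⟨a.2, haV⟩⟩
    have ha' : inclusion inf_le_left a' = a := rfl
    exact (isUnit_or_isUnit_one_sub_self a').imp (fun h => ha' ▸ h.map _)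
      fun h => by simpa [ha'] using h.map (inclusion inf_le_left)
  · exact .inl (hunit a haV)

variable (A V) in
abbrev infMaximalIdeal [IsLocalRing A] : Ideal ↥(A ⊓ V.toSubring) :=
  (maximalIdeal A).comap (inclusion inf_le_left)

theorem mem_infMaximalIdeal_iff [IsLocalRing A] (x : ↥(A ⊓ V.toSubring)) :
    x ∈ infMaximalIdeal A V ↔ ¬ IsUnit (⟨(x : K), (mem_inf.mp x.2).1⟩ : A) :=
  Iff.rfl

theorem coe_eq_setOf_div_of_notMem_infMaximalIdeal [IsLocalRing A]
    (hunit : ∀ a : A, (a : K) ∉ V → IsUnit a) :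
    (A : Set K) = {y : K | ∃ a s : ↥(A ⊓ V.toSubring), s ∉ infMaximalIdeal A V ∧
      y = (a : K) / (s : K)} := by
  ext y
  constructor
  · intro hy
    by_cases hyV : y ∈ V
    · exact ⟨⟨y, mem_inf.mpr ⟨hy, hyV⟩⟩, 1, fun h => h isUnit_one, (div_one y).symm⟩
    · obtain ⟨hy0, hyinv⟩ := Submonoid.isUnit_iff_and.mp (hunit ⟨y, hy⟩ hyV)
      refine ⟨1, ⟨y⁻¹, mem_inf.mpr ⟨hyinv, (V.mem_or_inv_mem y).resolve_left hyV⟩⟩, ?_, ?_⟩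
      · exact not_not.mpr (Submonoid.isUnit_iff_and.mpr ⟨inv_ne_zero hy0, by simpa using hy⟩)
      · simp
  · rintro ⟨a, s, hs, rfl⟩
    rw [SetLike.mem_coe, div_eq_mul_inv]
    exact A.mul_mem (mem_inf.mp a.2).1 (Submonoid.isUnit_iff_and.mp (not_not.mp hs)).2

theorem dvd_of_notMem_infMaximalIdeal_of_div_mem [IsLocalRing A] {x : ↥(A ⊓ V.toSubring)}
    (hx : x ∉ infMaximalIdeal A V) {y : ↥(A ⊓ V.toSubring)} (hyx : (y : K) / x ∈ V) : x ∣ y := by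
  obtain ⟨hx0, hxinv⟩ : (x : K) ≠ 0 ∧ (x : K)⁻¹ ∈ A :=
    Submonoid.isUnit_iff_and.mp (not_not.mp hx)
  have hyxA : (y : K) / x ∈ A := by rw [div_eq_mul_inv]; exact A.mul_mem (mem_inf.mp y.2).1 hxinv
  exact ⟨⟨(y : K) / x, mem_inf.mpr ⟨hyxA, hyx⟩⟩, Subtype.ext (mul_div_cancel₀ _ hx0).symm⟩

theorem exists_sub_mul_mem_infMaximalIdeal_or [IsLocalRing A] (x y : ↥(A ⊓ V.toSubring)) :
    (∃ c, y - c * x ∈ infMaximalIdeal A V) ∨ (∃ c, x - c * y ∈ infMaximalIdeal A V) := by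
  have of_dvd : ∀ {x y : ↥(A ⊓ V.toSubring)}, x ∣ y → ∃ c, y - c * x ∈ infMaximalIdeal A V :=
    fun ⟨c, hc⟩ => ⟨c, by rw [hc, mul_comm, sub_self]; exact zero_mem _⟩
  by_cases hx : x ∈ infMaximalIdeal A V
  · exact .inr ⟨0, by simpa using hx⟩
  by_cases hy : y ∈ infMaximalIdeal A V
  · exact .inl ⟨0, by simpa using hy⟩
  rcases V.mem_or_inv_mem ((y : K) / x) with h | h
  · exact .inl (of_dvd (dvd_of_notMem_infMaximalIdeal_of_div_mem hx h))
  · exact .inr (of_dvd (dvd_of_notMem_infMaximalIdeal_of_div_mem hy (by rwa [inv_div] at h)))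

end Subring

open Subring in
theorem inf_valuation_local_structure_general
    {K : Type*} [Field K] (A : Subring K) (V : ValuationSubring K) (s : ℕ)
    [Fintype (MaximalSpectrum A)] (hs : Fintype.card (MaximalSpectrum A) = s)
    (hres : ∀ m : Ideal ↥(A ⊓ V.toSubring), m.IsMaximal →
      ((s : Cardinal) + 1) ≤ Cardinal.mk (↥(A ⊓ V.toSubring) ⧸ m))
    (hloc : IsLocalRing ↥(A ⊓ V.toSubring)) :
    IsLocalRing A ∧
      ∃ P : Ideal ↥(A ⊓ V.toSubring), P.IsPrime ∧
        (∀ x : ↥(A ⊓ V.toSubring), x ∈ P ↔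
          ¬ IsUnit (⟨(x : K), (Subring.mem_inf.mp x.2).1⟩ : A)) ∧
        ((A : Set K) = {y : K | ∃ a s' : ↥(A ⊓ V.toSubring), s' ∉ P ∧
          y = (a : K) / (s' : K)}) ∧
        (∀ x y : ↥(A ⊓ V.toSubring),
          (∃ c : ↥(A ⊓ V.toSubring), y - c * x ∈ P) ∨
          (∃ c : ↥(A ⊓ V.toSubring), x - c * y ∈ P)) ∧
        (∀ a : K, a ∈ A → ∃ x y : ↥(A ⊓ V.toSubring), y ∉ P ∧
          ∃ h : (y : K) * a - (x : K) ∈ A,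
            ¬ IsUnit (⟨(y : K) * a - (x : K), h⟩ : A)) := by
  have hcard : #(MaximalSpectrum A) < #(ResidueField ↥(A ⊓ V.toSubring)) := by
    rw [mk_fintype, hs]
    exact natCast_add_one_le_iff.mp (hres _ (maximalIdeal.isMaximal _))
  have hunit : ∀ a : A, (a : K) ∉ V → IsUnit a := fun _ =>
    isUnit_of_notMem_valuationSubring (exists_isUnit_add_map_of_mk_maximalSpectrum_lt _ hcard)
  have hAloc : IsLocalRing A := isLocalRing_of_isUnit_of_notMem_valuationSubring hunit
  have hA := coe_eq_setOf_div_of_notMem_infMaximalIdeal hunit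
  refine ⟨hAloc, infMaximalIdeal A V, inferInstance, mem_infMaximalIdeal_iff, hA,
    exists_sub_mul_mem_infMaximalIdeal_or, fun a ha => ?_⟩
  obtain ⟨x, y, hy, rfl⟩ : a ∈ {y : K | ∃ a s : ↥(A ⊓ V.toSubring), s ∉ infMaximalIdeal A V ∧
      y = (a : K) / (s : K)} := hA ▸ ha
  have hy0 : (y : K) ≠ 0 := (Submonoid.isUnit_iff_and.mp (not_not.mp hy)).1
  have h0 : (y : K) * (x / y) - x = 0 := by field_simp; ring
  exact ⟨x, y, hy, h0 ▸ A.zero_mem, fun hu => (Submonoid.isUnit_iff_and.mp hu).1 h0⟩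

/-- **Theorem 4.7(i).**
Let `V` be a valuation domain and `A` a semilocal domain with `s` maximal ideals, inside a
common quotient field `K` which is also the quotient field of `A ∩ V`, and suppose every
residue field of `A ∩ V` has at least `s + 1` elements.  If `A ∩ V` is local, then `A` is
local, the maximal ideal `m_A` of `A` (its set of nonunits) is a prime ideal `P` of
`A ∩ V`, `A` is the localization of `A ∩ V` at `P`, and the quotient `(A ∩ V)/P` is a
valuation domain with quotient field `A/m_A` (every element of the residue field of `A` is
a fraction of elements of `(A ∩ V)/P`, embedded via the inclusion `A ∩ V → A`). -/
theorem inf_valuation_local_structure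
    {K : Type*} [Field K] (A : Subring K) (V : ValuationSubring K) (s : ℕ)
    [Fintype (MaximalSpectrum A)] (hs : Fintype.card (MaximalSpectrum A) = s)
    (hfrac : ∀ x : K, ∃ a ∈ A ⊓ V.toSubring, ∃ b ∈ A ⊓ V.toSubring, b ≠ 0 ∧ x = a / b)
    (hres : ∀ m : Ideal ↥(A ⊓ V.toSubring), m.IsMaximal →
      ((s : Cardinal) + 1) ≤ Cardinal.mk (↥(A ⊓ V.toSubring) ⧸ m))
    (hloc : IsLocalRing ↥(A ⊓ V.toSubring)) :
    IsLocalRing A ∧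
      ∃ P : Ideal ↥(A ⊓ V.toSubring), P.IsPrime ∧
        (∀ x : ↥(A ⊓ V.toSubring), x ∈ P ↔
          ¬ IsUnit (⟨(x : K), (Subring.mem_inf.mp x.2).1⟩ : A)) ∧
        ((A : Set K) = {y : K | ∃ a s' : ↥(A ⊓ V.toSubring), s' ∉ P ∧
          y = (a : K) / (s' : K)}) ∧
        (∀ x y : ↥(A ⊓ V.toSubring),
          (∃ c : ↥(A ⊓ V.toSubring), y - c * x ∈ P) ∨
          (∃ c : ↥(A ⊓ V.toSubring), x - c * y ∈ P)) ∧
        (∀ a : K, a ∈ A → ∃ x y : ↥(A ⊓ V.toSubring), y ∉ P ∧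
          ∃ h : (y : K) * a - (x : K) ∈ A,
            ¬ IsUnit (⟨(y : K) * a - (x : K), h⟩ : A)) :=
  inf_valuation_local_structure_general A V s hs hres hloc
end

section
/- Let V be a valuation domain and A a semilocal domain with s maximal ideals m_1,…,m_s, with Q(A)=Q(V)=Q(A∩V), and suppose every residue field of A∩V has at least s+1 elements. If A∩V is not local, then for every i, the localization A_{m_i} equals the localization of A∩V at the prime m_i ∩ V ∩ A∩V (i.e., A_{m_i} = (A∩V)_{m_i ∩ V}). -/
/-!
Put `R = A ∩ V`. A nonunit of `R` is a nonunit of `A` or of `V`, so by prime avoidance every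
maximal ideal of `R` is contracted from `A` or from `V`; hence `R` is semilocal, and the Chinese
remainder theorem together with the size of its residue fields yields `r₀, …, r_s ∈ R` whose
pairwise differences are units. Given `α ∈ A \ V`, the `s + 1` elements `α + rᵢ` cannot all be
nonunits of `A`: two of them would lie in the same maximal ideal, and so would a unit `rᵢ - rⱼ`.
If `α + t` is a unit of `A` with `t ∈ R`, then `u = (α + t)⁻¹` lies in the maximal ideal of `V`
and `uα = 1 - ut ∈ V`. So every element of `A` is brought into `V` by a unit of `A` lying in `V`,
and any fraction `α / β` of `A` with `β ∉ m` becomes a fraction of `R` with denominator `∉ m`.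
-/

theorem exists_pairwise_isUnit_sub {R : Type*} [CommRing R] [Finite (MaximalSpectrum R)] (n : ℕ)
    (hres : ∀ M : Ideal R, M.IsMaximal → (n : Cardinal) ≤ Cardinal.mk (R ⧸ M)) :
    ∃ r : Fin n → R, Pairwise fun i j => IsUnit (r i - r j) := by
  have emb (M : MaximalSpectrum R) : Fin n ↪ R ⧸ M.asIdeal :=
    (Cardinal.lift_mk_le'.mp (by simpa using hres M.asIdeal M.isMaximal)).some
  have hcop : Pairwise fun M N : MaximalSpectrum R => IsCoprime M.asIdeal N.asIdeal :=
    fun _ _ => MaximalSpectrum.isCoprime_of_ne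
  choose r hr using fun i => Ideal.pi_quotient_surjective hcop fun M => emb M i
  refine ⟨r, fun i j hij => ?_⟩
  by_contra hunit
  obtain ⟨M, hM, hmem⟩ := exists_max_ideal_of_mem_nonunits hunit
  refine hij ((emb ⟨M, hM⟩).injective ?_)
  rw [← hr i, ← hr j]
  exact Ideal.Quotient.eq.mpr hmem

theorem exists_isUnit_add_of_card_maximalSpectrum_lt {S ι : Type*} [CommRing S]
    [Fintype (MaximalSpectrum S)] [Fintype ι] {r : ι → S}
    (hr : Pairwise fun i j => IsUnit (r i - r j))
    (hcard : Fintype.card (MaximalSpectrum S) < Fintype.card ι) (α : S) :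
    ∃ i, IsUnit (α + r i) := by
  by_contra! hnonunit
  choose M hM hmem using fun i => exists_max_ideal_of_mem_nonunits (hnonunit i)
  obtain ⟨i, j, hij, hMij⟩ :=
    Fintype.exists_ne_map_eq_of_card_lt (fun i => (⟨M i, hM i⟩ : MaximalSpectrum S)) hcard
  have hM_eq : M j = M i := congrArg MaximalSpectrum.asIdeal hMij.symm
  have hsub : r i - r j ∈ M i := by
    have h := (M i).sub_mem (hmem i) (hM_eq ▸ hmem j)
    rwa [add_sub_add_left_eq_sub] at h
  exact (hM i).ne_top ((M i).eq_top_of_isUnit_mem hsub (hr hij))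

namespace Subring

variable {K : Type*} [Field K]

theorem finite_maximalSpectrum_inf (A B : Subring K) [Finite (MaximalSpectrum A)]
    [Finite (MaximalSpectrum B)] : Finite (MaximalSpectrum ↥(A ⊓ B)) := by
  let fA := inclusion (inf_le_left : A ⊓ B ≤ A)
  let fB := inclusion (inf_le_right : A ⊓ B ≤ B)
  let S : Set (Ideal ↥(A ⊓ B)) :=
    Set.range (fun P : MaximalSpectrum A => P.asIdeal.comap fA) ∪
      Set.range (fun P : MaximalSpectrum B => P.asIdeal.comap fB)
  have hS : S.Finite := (Set.finite_range _).union (Set.finite_range _)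
  have hnonunit (x : ↥(A ⊓ B)) (hx : ¬IsUnit x) : x ∈ ⋃ I ∈ S, (I : Set ↥(A ⊓ B)) := by
    have : ¬IsUnit (fA x) ∨ ¬IsUnit (fB x) := by
      simp only [Submonoid.isUnit_iff_and] at hx ⊢
      exact not_and_or.mp fun h => hx ⟨h.1.1, mem_inf.mpr ⟨h.1.2, h.2.2⟩⟩
    simp only [Set.mem_iUnion, exists_prop]
    rcases this with h | h
    · obtain ⟨P, hP, hxP⟩ := exists_max_ideal_of_mem_nonunits h
      exact ⟨_, Or.inl ⟨⟨P, hP⟩, rfl⟩, hxP⟩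
    · obtain ⟨P, hP, hxP⟩ := exists_max_ideal_of_mem_nonunits h
      exact ⟨_, Or.inr ⟨⟨P, hP⟩, rfl⟩, hxP⟩
  have hmem (M : MaximalSpectrum ↥(A ⊓ B)) : M.asIdeal ∈ S := by
    have := M.isMaximal
    refine (Ideal.subset_iUnion_iff_mem_of_isMaximal_of_finite hS M.asIdeal M.asIdeal ?_
      M.isMaximal.ne_top M.isMaximal.ne_top).mp fun x hx => hnonunit x fun hu =>
        M.isMaximal.ne_top (M.asIdeal.eq_top_of_isUnit_mem hx hu)
    rintro I (⟨P, rfl⟩ | ⟨P, rfl⟩) - - <;> exact Ideal.comap_isPrime _ _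
  have : Finite S := hS.to_subtype
  exact Finite.of_injective (fun M => (⟨M.asIdeal, hmem M⟩ : S))
    fun M N h => MaximalSpectrum.ext (congrArg Subtype.val h)

end Subring

namespace ValuationSubring

variable {K : Type*} [Field K] {A : Subring K} (V : ValuationSubring K)

instance : IsLocalRing V.toSubring := inferInstanceAs (IsLocalRing V)

theorem exists_unit_mul_mem_of_isUnit_add {α t : A} (hα : (α : K) ∉ V) (ht : (t : K) ∈ V)
    (hunit : IsUnit (α + t)) : ∃ u : Aˣ, (u : K) ∈ V ∧ (u : K) * α ∈ V := by
  have hne : (α : K) + t ≠ 0 := by simpa using (hunit.map A.subtype).ne_zero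
  have hinv : ((α : K) + t)⁻¹ ∈ V :=
    (V.mem_or_inv_mem _).resolve_left fun h => hα (by simpa using V.sub_mem h ht)
  have hcoe : ((hunit.unit⁻¹ : Aˣ) : K) = ((α : K) + t)⁻¹ := by
    have h := map_units_inv A.subtype hunit.unit
    rwa [IsUnit.unit_spec] at h
  refine ⟨hunit.unit⁻¹, hcoe ▸ hinv, ?_⟩
  have hmul : ((α : K) + t)⁻¹ * α = 1 - ((α : K) + t)⁻¹ * t := by
    field_simp
    ring
  rw [hcoe, hmul]
  exact V.sub_mem V.one_mem (V.mul_mem _ _ hinv ht)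

theorem exists_unit_mul_mem_of_card_maximalSpectrum_lt {ι : Type*} [Fintype ι]
    [Fintype (MaximalSpectrum A)] {r : ι → ↥(A ⊓ V.toSubring)}
    (hr : Pairwise fun i j => IsUnit (r i - r j))
    (hcard : Fintype.card (MaximalSpectrum A) < Fintype.card ι) (α : A) :
    ∃ u : Aˣ, (u : K) ∈ V ∧ (u : K) * α ∈ V := by
  by_cases hα : (α : K) ∈ V
  · exact ⟨1, V.one_mem, by simpa using hα⟩
  let f := Subring.inclusion (inf_le_left : A ⊓ V.toSubring ≤ A)
  obtain ⟨i, hi⟩ := exists_isUnit_add_of_card_maximalSpectrum_lt (r := fun i => f (r i))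
    (fun i j hij => by simpa using (hr hij).map f) hcard α
  exact V.exists_unit_mul_mem_of_isUnit_add hα (Subring.mem_inf.mp (r i).2).2 hi

end ValuationSubring

theorem inf_valuation_not_local_localizations_general
    {K : Type*} [Field K] (A : Subring K) (V : ValuationSubring K) (s : ℕ)
    [Fintype (MaximalSpectrum A)] (hs : Fintype.card (MaximalSpectrum A) = s)
    (hres : ∀ m : Ideal ↥(A ⊓ V.toSubring), m.IsMaximal →
      ((s : Cardinal) + 1) ≤ Cardinal.mk (↥(A ⊓ V.toSubring) ⧸ m))
    (m : Ideal A) :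
    {x : K | ∃ a s' : A, (s' ∉ m) ∧ x = (a : K) / (s' : K)} =
      {x : K | ∃ a s' : ↥(A ⊓ V.toSubring),
        (¬ ∃ h : (s' : K) ∈ A, (⟨(s' : K), h⟩ : A) ∈ m) ∧
        x = (a : K) / (s' : K)} := by
  have := Subring.finite_maximalSpectrum_inf A V.toSubring
  obtain ⟨r, hr⟩ := exists_pairwise_isUnit_sub (s + 1) (by simpa using hres)
  have key := V.exists_unit_mul_mem_of_card_maximalSpectrum_lt hr (by simp [hs])
  ext x
  constructor
  · rintro ⟨α, β, hβ, rfl⟩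
    obtain ⟨u, huV, huα⟩ := key α
    obtain ⟨w, hwV, hwβ⟩ := key β
    have hvα : ((u * w : Aˣ) : K) * α ∈ V := by
      simpa [mul_right_comm] using V.mul_mem _ _ huα hwV
    have hvβ : ((u * w : Aˣ) : K) * β ∈ V := by
      simpa [mul_assoc] using V.mul_mem _ _ huV hwβ
    refine ⟨⟨_, Subring.mem_inf.mpr ⟨A.mul_mem ((u * w : Aˣ) : A).2 α.2, hvα⟩⟩,
      ⟨_, Subring.mem_inf.mpr ⟨A.mul_mem ((u * w : Aˣ) : A).2 β.2, hvβ⟩⟩, ?_, ?_⟩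
    · rintro ⟨_, hmem⟩
      exact hβ ((m.unit_mul_mem_iff_mem (u * w).isUnit).mp hmem)
    · exact (mul_div_mul_left _ _ (by simp)).symm
  · rintro ⟨a, b, hb, rfl⟩
    exact ⟨⟨a, (Subring.mem_inf.mp a.2).1⟩, ⟨b, (Subring.mem_inf.mp b.2).1⟩,
      fun h => hb ⟨_, h⟩, rfl⟩

/-- **Theorem 4.7(ii).**
Let `V` be a valuation domain and `A` a semilocal domain with maximal ideals
`m₁, …, m_s`, inside a common quotient field `K` which is also the quotient field of
`A ∩ V`, and suppose every residue field of `A ∩ V` has at least `s + 1` elements.  If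
`A ∩ V` is not local, then for every maximal ideal `m` of `A` the localization `A_m`
coincides with the localization of `A ∩ V` at the contraction `m ∩ V` (both realized as
subsets of `K`). -/
theorem inf_valuation_not_local_localizations
    {K : Type*} [Field K] (A : Subring K) (V : ValuationSubring K) (s : ℕ)
    [Fintype (MaximalSpectrum A)] (hs : Fintype.card (MaximalSpectrum A) = s)
    (hfrac : ∀ x : K, ∃ a ∈ A ⊓ V.toSubring, ∃ b ∈ A ⊓ V.toSubring, b ≠ 0 ∧ x = a / b)
    (hres : ∀ m : Ideal ↥(A ⊓ V.toSubring), m.IsMaximal →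
      ((s : Cardinal) + 1) ≤ Cardinal.mk (↥(A ⊓ V.toSubring) ⧸ m))
    (hnotloc : ¬ IsLocalRing ↥(A ⊓ V.toSubring))
    (m : Ideal A) (hm : m.IsMaximal) :
    {x : K | ∃ a s' : A, (s' ∉ m) ∧ x = (a : K) / (s' : K)} =
      {x : K | ∃ a s' : ↥(A ⊓ V.toSubring),
        (¬ ∃ h : (s' : K) ∈ A, (⟨(s' : K), h⟩ : A) ∈ m) ∧
        x = (a : K) / (s' : K)} :=
  inf_valuation_not_local_localizations_general A V s hs hres m
end

section
/- Let K be a field, G a totally ordered abelian group, S a proper submonoid of the nonnegative cone G_{≥0}, and a ∈ G_{≥0} \ S. Consider the generalized power series ring D = [[K^S]] inside V = [[K^{G_{≥0}}]], and assume D and V have the same quotient field. If D is maximal with respect to excluding the monomial X^a (i.e., X^a ∉ D but X^a ∈ D[z] for every z in the quotient field not in D), then for every g ∈ G with 2g ≠ a: X^g ∈ D if and only if X^{a−g} ∉ D. In particular X^g ∈ D for all g > a, and y·m_V ⊆ D where y = X^a and m_V is the maximal ideal of V. -/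
/-!
The subring generated by `[[K^S]]` and a monomial `X^h` lies in `[[K^{S + ℕh}]]`, so
maximality of `[[K^S]]` excluding `X^a` yields, for every `h ≥ 0` outside `S`, a
representation `a = s + n h` with `s ∈ S` and `n ≥ 1`. Hence no `g > a` is missing from `S`
(else `a ≥ n g > a`). If neither `g` nor `a - g` lay in `S`, then `n = 1` is impossible for
either of them, so `2g ≤ a` and `2(a - g) ≤ a`, i.e. `2g = a`. The converse direction is
just `a ∉ S`.
-/


variable {Γ : Type*} [AddCommGroup Γ] [LinearOrder Γ] [IsOrderedAddMonoid Γ] {K : Type*} [Field K]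

/-- The generalized power series ring `[[K^S]]`: the subring of the Hahn series field
`HahnSeries Γ K` consisting of series with support contained in the submonoid `S`. -/
def hahnSubring (K : Type*) [Field K] (S : AddSubmonoid Γ) : Subring (HahnSeries Γ K) where
  carrier := {f | ∀ g : Γ, f.coeff g ≠ 0 → g ∈ S}
  zero_mem' := by intro g hg; simp at hg
  one_mem' := by
    intro g hg
    rw [HahnSeries.coeff_one] at hg
    by_cases h : g = 0
    · exact h ▸ S.zero_mem
    · simp [h] at hg
  add_mem' := by
    intro a b ha hb g hg
    rw [HahnSeries.coeff_add] at hg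
    by_cases h : a.coeff g = 0
    · exact hb g (by intro h'; rw [h, h'] at hg; simp at hg)
    · exact ha g h
  neg_mem' := by
    intro a ha g hg
    rw [HahnSeries.coeff_neg] at hg
    exact ha g (by simpa using hg)
  mul_mem' := by
    intro a b ha hb g hg
    obtain ⟨i, hi, j, hj, rfl⟩ :=
      HahnSeries.support_mul_subset ((HahnSeries.mem_support _ _).mpr hg)
    exact S.add_mem (ha i hi) (hb j hj)

namespace AddSubmonoid

section Group

variable {M : Type*} [AddCommGroup M] {S : AddSubmonoid M} {a h : M}

lemma exists_sub_nsmul_mem_of_mem_sup_closure (haS : a ∉ S) (ha : a ∈ S ⊔ closure {h}) :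
    ∃ n : ℕ, n ≠ 0 ∧ a - n • h ∈ S := by
  obtain ⟨s, hs, t, ht, rfl⟩ := mem_sup.mp ha
  obtain ⟨n, rfl⟩ := mem_closure_singleton.mp ht
  refine ⟨n, ?_, by rwa [add_sub_cancel_right]⟩
  rintro rfl
  simp [hs] at haS

end Group

section Ordered

variable {S : AddSubmonoid Γ} {a : Γ}

lemma mem_of_lt (hS : S ≤ nonneg Γ) (ha0 : 0 ≤ a) (haS : a ∉ S)
    (hgen : ∀ h, 0 ≤ h → h ∉ S → a ∈ S ⊔ closure {h}) {g : Γ} (hg : a < g) : g ∈ S := by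
  by_contra hgS
  have hg0 : 0 ≤ g := ha0.trans hg.le
  obtain ⟨n, hn, hmem⟩ := exists_sub_nsmul_mem_of_mem_sup_closure haS (hgen g hg0 hgS)
  have hna : n • g ≤ a := sub_nonneg.mp (hS hmem)
  exact (hg.trans_le ((le_self_nsmul hg0 hn).trans hna)).false

lemma mem_iff_sub_notMem (hS : S ≤ nonneg Γ) (ha0 : 0 ≤ a) (haS : a ∉ S)
    (hgen : ∀ h, 0 ≤ h → h ∉ S → a ∈ S ⊔ closure {h}) {g : Γ} (hg : g + g ≠ a) :
    g ∈ S ↔ a - g ∉ S := by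
  refine ⟨fun hgS hagS => haS (by simpa using S.add_mem hgS hagS), fun hagS => ?_⟩
  by_contra hgS
  have hga : a - g ≤ a := not_lt.mp fun h => hagS (mem_of_lt hS ha0 haS hgen h)
  have hg0 : 0 ≤ g := sub_le_self_iff a |>.mp hga
  have hag0 : 0 ≤ a - g := sub_nonneg.mpr (not_lt.mp fun h => hgS (mem_of_lt hS ha0 haS hgen h))
  obtain ⟨i, -, hi⟩ := exists_sub_nsmul_mem_of_mem_sup_closure haS (hgen g hg0 hgS)
  obtain ⟨j, -, hj⟩ := exists_sub_nsmul_mem_of_mem_sup_closure haS (hgen _ hag0 hagS)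
  have two_le_i : 2 ≤ i := by
    by_contra! hi2
    interval_cases i
    · simp [haS] at hi
    · exact hagS (by simpa using hi)
  have two_le_j : 2 ≤ j := by
    by_contra! hj2
    interval_cases j
    · simp [haS] at hj
    · exact hgS (by simpa using hj)
  have hgg : g + g ≤ a := by
    rw [← two_nsmul]
    exact (nsmul_le_nsmul_left hg0 two_le_i).trans (sub_nonneg.mp (hS hi))
  have hagag : (a - g) + (a - g) ≤ a := by
    rw [← two_nsmul]
    exact (nsmul_le_nsmul_left hag0 two_le_j).trans (sub_nonneg.mp (hS hj))
  refine hg (hgg.antisymm ?_)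
  have := sub_nonneg.mpr hagag
  rwa [show a - (a - g + (a - g)) = g + g - a by abel, sub_nonneg] at this

end Ordered

end AddSubmonoid

lemma single_mem_hahnSubring_iff {S : AddSubmonoid Γ} {g : Γ} :
    HahnSeries.single g (1 : K) ∈ hahnSubring K S ↔ g ∈ S := by
  refine ⟨fun h => h g (by simp), fun hg c hc => ?_⟩
  rw [HahnSeries.coeff_single] at hc
  split_ifs at hc with h
  · exact h ▸ hg
  · exact absurd rfl hc

lemma hahnSubring_mono {S T : AddSubmonoid Γ} (hST : S ≤ T) :
    hahnSubring K S ≤ hahnSubring K T :=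
  fun _ hf g hg => hST (hf g hg)

lemma mem_sup_closure_of_single_mem_closure {S : AddSubmonoid Γ} {a h : Γ}
    (ha : HahnSeries.single a (1 : K) ∈
      Subring.closure (insert (HahnSeries.single h 1) (hahnSubring K S : Set (HahnSeries Γ K)))) :
    a ∈ S ⊔ AddSubmonoid.closure {h} := by
  have hle : Subring.closure (insert (HahnSeries.single h 1) (hahnSubring K S : Set _)) ≤
      hahnSubring K (S ⊔ AddSubmonoid.closure {h}) := by
    rw [Subring.closure_le, Set.insert_subset_iff]
    exact ⟨single_mem_hahnSubring_iff.mpr (AddSubmonoid.mem_sup_right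
      (AddSubmonoid.subset_closure rfl)), hahnSubring_mono le_sup_left⟩
  exact single_mem_hahnSubring_iff.mp (hle ha)

lemma single_mul_mem_hahnSubring {S : AddSubmonoid Γ} {a : Γ} (hS : ∀ g, a < g → g ∈ S)
    {h : HahnSeries Γ K} (hV : h ∈ hahnSubring K (AddSubmonoid.nonneg Γ)) (h0 : h.coeff 0 = 0) :
    HahnSeries.single a (1 : K) * h ∈ hahnSubring K S := by
  intro c hc
  obtain ⟨x, hx, y, hy, rfl⟩ :=
    HahnSeries.support_mul_subset ((HahnSeries.mem_support _ _).mpr hc)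
  obtain rfl : x = a := HahnSeries.support_single_subset hx
  have hy0 : y ≠ 0 := by rintro rfl; exact hy h0
  exact hS _ (lt_add_of_pos_right x ((hV y hy).lt_of_ne' hy0))

theorem maximal_excluding_hahnSubring_symmetry_general
    (S : AddSubmonoid Γ) (hS : S ≤ AddSubmonoid.nonneg Γ)
    (a : Γ) (ha0 : 0 ≤ a) (haS : a ∉ S)
    (hfrac : ∀ x : HahnSeries Γ K,
      (∃ f g : HahnSeries Γ K, f ∈ hahnSubring K (AddSubmonoid.nonneg Γ) ∧
          g ∈ hahnSubring K (AddSubmonoid.nonneg Γ) ∧ g ≠ 0 ∧ x = f / g) ↔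
      (∃ f g : HahnSeries Γ K, f ∈ hahnSubring K S ∧ g ∈ hahnSubring K S ∧
          g ≠ 0 ∧ x = f / g))
    (hmax : ∀ z : HahnSeries Γ K,
      (∃ f g : HahnSeries Γ K, f ∈ hahnSubring K S ∧ g ∈ hahnSubring K S ∧
          g ≠ 0 ∧ z = f / g) →
      z ∉ hahnSubring K S →
      HahnSeries.single a (1 : K) ∈
        Subring.closure (insert z (hahnSubring K S : Set (HahnSeries Γ K)))) :
    (∀ g : Γ, g + g ≠ a →
      (HahnSeries.single g (1 : K) ∈ hahnSubring K S ↔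
        HahnSeries.single (a - g) (1 : K) ∉ hahnSubring K S)) ∧
    (∀ g : Γ, a < g → HahnSeries.single g (1 : K) ∈ hahnSubring K S) ∧
    (∀ h : HahnSeries Γ K, h ∈ hahnSubring K (AddSubmonoid.nonneg Γ) →
      h.coeff 0 = 0 → HahnSeries.single a (1 : K) * h ∈ hahnSubring K S) := by
  have hgen : ∀ h, 0 ≤ h → h ∉ S → a ∈ S ⊔ AddSubmonoid.closure {h} := by
    intro h hh0 hhS
    have hfracD := (hfrac (HahnSeries.single h 1)).mp ⟨_, 1,
      single_mem_hahnSubring_iff.mpr hh0, one_mem _, one_ne_zero, (div_one _).symm⟩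
    exact mem_sup_closure_of_single_mem_closure
      (hmax _ hfracD (mt single_mem_hahnSubring_iff.mp hhS))
  have hlt : ∀ g, a < g → g ∈ S := fun g => S.mem_of_lt hS ha0 haS hgen
  refine ⟨fun g hg => ?_, fun g hg => single_mem_hahnSubring_iff.mpr (hlt g hg),
    fun h hV h0 => single_mul_mem_hahnSubring hlt hV h0⟩
  rw [single_mem_hahnSubring_iff, single_mem_hahnSubring_iff]
  exact S.mem_iff_sub_notMem hS ha0 haS hgen hg

/-- **Theorem 3.4, (1) ⇒ (2).**
Let `S` be a proper submonoid of the nonnegative cone of a totally ordered abelian group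
`Γ`, `a ≥ 0` with `a ∉ S`, and `D = [[K^S]] ⊆ V = [[K^{Γ≥0}]]` with the same quotient
field.  If `D` is maximal with respect to excluding the monomial `X^a`, then for every
`g` with `2g ≠ a`, `X^g ∈ D` iff `X^{a-g} ∉ D`; in particular `X^g ∈ D` for all `g > a`,
and `X^a · m_V ⊆ D`, where `m_V = { h ∈ V : h.coeff 0 = 0 }` is the maximal ideal of
`V`. -/
theorem maximal_excluding_hahnSubring_symmetry
    (S : AddSubmonoid Γ) (hS : S ≤ AddSubmonoid.nonneg Γ)
    (hproper : S ≠ AddSubmonoid.nonneg Γ)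
    (a : Γ) (ha0 : 0 ≤ a) (haS : a ∉ S)
    (hfrac : ∀ x : HahnSeries Γ K,
      (∃ f g : HahnSeries Γ K, f ∈ hahnSubring K (AddSubmonoid.nonneg Γ) ∧
          g ∈ hahnSubring K (AddSubmonoid.nonneg Γ) ∧ g ≠ 0 ∧ x = f / g) ↔
      (∃ f g : HahnSeries Γ K, f ∈ hahnSubring K S ∧ g ∈ hahnSubring K S ∧
          g ≠ 0 ∧ x = f / g))
    (hXa : HahnSeries.single a (1 : K) ∉ hahnSubring K S)
    (hmax : ∀ z : HahnSeries Γ K,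
      (∃ f g : HahnSeries Γ K, f ∈ hahnSubring K S ∧ g ∈ hahnSubring K S ∧
          g ≠ 0 ∧ z = f / g) →
      z ∉ hahnSubring K S →
      HahnSeries.single a (1 : K) ∈
        Subring.closure (insert z (hahnSubring K S : Set (HahnSeries Γ K)))) :
    (∀ g : Γ, g + g ≠ a →
      (HahnSeries.single g (1 : K) ∈ hahnSubring K S ↔
        HahnSeries.single (a - g) (1 : K) ∉ hahnSubring K S)) ∧
    (∀ g : Γ, a < g → HahnSeries.single g (1 : K) ∈ hahnSubring K S) ∧
    (∀ h : HahnSeries Γ K, h ∈ hahnSubring K (AddSubmonoid.nonneg Γ) →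
      h.coeff 0 = 0 → HahnSeries.single a (1 : K) * h ∈ hahnSubring K S) :=
  maximal_excluding_hahnSubring_symmetry_general S hS a ha0 haS hfrac hmax
end

section
/- Let K be a field, G a totally ordered abelian group, S a proper submonoid of G_{≥0}, and a ∈ G_{≥0} \ S. Suppose that for every g ∈ G with 2g ≠ a, exactly one of g ∈ S and a−g ∈ S holds (where membership in S for g ∉ G_{≥0} is interpreted as false, i.e., g ∈ S ⇔ a−g ∉ S for elements representable). Then the generalized power series ring D = [[K^S]] is maximal with respect to excluding the element X^a: for every z in the quotient field of D with z ∉ D, one has X^a ∈ D[z]. -/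
variable {Γ : Type*} [AddCommGroup Γ] [LinearOrder Γ] [IsOrderedAddMonoid Γ] {K : Type*} [Field K]

/-!
Since `S ⊆ Γ≥0`, the symmetry condition puts every `g > a` into `S`. Hence any `p ∈ D[z]` of
order `a` gives `X^a`: `p` minus its leading term lies in `D`, and the leading term is a unit
of `K` times `X^a`. To find such a `p`, let `b` be the least exponent of `z` outside `S`; the
tail `w` of `z` from `b` on differs from `z` by an element of `D`, so `w ∈ D[z]` and `w` has
order `b`. Either `2b = a` and `p = w²`, or `a - b ∈ S` and `p = X^(a-b) w`.
-/

namespace HahnSeries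

variable {Γ R : Type*} [LinearOrder Γ] [AddGroup R]

theorem sub_truncLT_ne_zero {x : HahnSeries Γ R} {b : Γ} (hb : x.coeff b ≠ 0) :
    x - truncLT b x ≠ 0 :=
  ne_zero_of_coeff_ne_zero (g := b) (by simpa using hb)

theorem order_sub_truncLT [Zero Γ] {x : HahnSeries Γ R} {b : Γ} (hb : x.coeff b ≠ 0) :
    (x - truncLT b x).order = b := by
  refine le_antisymm (order_le_of_coeff_ne_zero (by simpa using hb)) ?_
  refine (le_order_iff_forall (sub_truncLT_ne_zero hb)).2 fun j hj => ?_
  simp [hj]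

end HahnSeries

open HahnSeries

namespace hahnSubring

variable {S : AddSubmonoid Γ}

theorem single_mem {g : Γ} (hg : g ∈ S) (r : K) : single g r ∈ hahnSubring K S := by
  intro i hi
  rw [coeff_single] at hi
  split_ifs at hi with h
  · exact h ▸ hg
  · exact absurd rfl hi

theorem exists_truncLT_mem {z : HahnSeries Γ K} (hz : z ∉ hahnSubring K S) :
    ∃ b, z.coeff b ≠ 0 ∧ b ∉ S ∧ truncLT b z ∈ hahnSubring K S := by
  set T : Set Γ := {g | z.coeff g ≠ 0 ∧ g ∉ S}
  have hT : T.Nonempty := by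
    by_contra h
    exact hz fun g hg => by_contra fun hgS => h ⟨g, hg, hgS⟩
  have hTwf : T.IsWF := z.isWF_support.mono fun g hg => hg.1
  obtain ⟨hzb, hbS⟩ := hTwf.min_mem hT
  refine ⟨hTwf.min hT, hzb, hbS, fun g hg => ?_⟩
  rw [HahnSeries.coeff_truncLT] at hg
  split_ifs at hg with hlt
  · exact by_contra fun hgS => hTwf.not_lt_min hT ⟨hg, hgS⟩ hlt
  · exact absurd rfl hg

theorem sub_single_order_mem {p : HahnSeries Γ K} (hgt : ∀ g, p.order < g → g ∈ S) :
    p - single p.order p.leadingCoeff ∈ hahnSubring K S := by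
  intro g hg
  rcases lt_trichotomy g p.order with hlt | rfl | hlt
  · simp [coeff_eq_zero_of_lt_order hlt, coeff_single_of_ne hlt.ne] at hg
  · simp [leadingCoeff_eq] at hg
  · exact hgt g hlt

theorem single_order_mem {R : Subring (HahnSeries Γ K)} (hDR : hahnSubring K S ≤ R)
    {p : HahnSeries Γ K} (hpR : p ∈ R) (hp : p ≠ 0) (hgt : ∀ g, p.order < g → g ∈ S) :
    single p.order (1 : K) ∈ R := by
  have hlc : p.leadingCoeff ≠ 0 := leadingCoeff_ne_zero.2 hp
  have hunit : single p.order (1 : K) =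
      single 0 p.leadingCoeff⁻¹ * (p - (p - single p.order p.leadingCoeff)) := by
    rw [sub_sub_cancel, single_mul_single, zero_add, inv_mul_cancel₀ hlc]
  rw [hunit]
  exact mul_mem (hDR (single_mem S.zero_mem _))
    (sub_mem hpR (hDR (sub_single_order_mem hgt)))

end hahnSubring

theorem AddSubmonoid.mem_of_lt_of_symmetric {S : AddSubmonoid Γ}
    (hS : S ≤ AddSubmonoid.nonneg Γ) {a : Γ} (ha0 : 0 ≤ a)
    (hsym : ∀ g : Γ, g + g ≠ a → (g ∈ S ↔ a - g ∉ S)) {g : Γ} (hg : a < g) :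
    g ∈ S := by
  have hneg : a - g < 0 := sub_neg.2 hg
  have hdouble : (a - g) + (a - g) ≠ a := (add_neg hneg hneg).trans_le ha0 |>.ne
  have hnot : a - g ∉ S := fun h => (hS h : 0 ≤ a - g).not_gt hneg
  simpa using mt (hsym (a - g) hdouble).2 hnot

theorem hahnSubring_symmetry_maximal_excluding_general
    (S : AddSubmonoid Γ) (hS : S ≤ AddSubmonoid.nonneg Γ)
    (a : Γ) (ha0 : 0 ≤ a)
    (hsym : ∀ g : Γ, g + g ≠ a → (g ∈ S ↔ a - g ∉ S)) :
    ∀ z : HahnSeries Γ K,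
      (∃ f g : HahnSeries Γ K, f ∈ hahnSubring K S ∧ g ∈ hahnSubring K S ∧
          g ≠ 0 ∧ z = f / g) →
      z ∉ hahnSubring K S →
      HahnSeries.single a (1 : K) ∈
        Subring.closure (insert z (hahnSubring K S : Set (HahnSeries Γ K))) := by
  intro z _ hz
  set R := Subring.closure (insert z (hahnSubring K S : Set (HahnSeries Γ K)))
  have hDR : hahnSubring K S ≤ R := fun _ hx =>
    Subring.subset_closure (Set.mem_insert_of_mem _ hx)
  obtain ⟨b, hzb, hbS, htrunc⟩ := hahnSubring.exists_truncLT_mem hz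
  set w := z - truncLT b z
  have hwR : w ∈ R := sub_mem (Subring.subset_closure (Set.mem_insert _ _)) (hDR htrunc)
  have hw0 : w ≠ 0 := sub_truncLT_ne_zero hzb
  obtain ⟨p, hpR, hp0, hpa⟩ : ∃ p ∈ R, p ≠ 0 ∧ p.order = a := by
    by_cases hb : b + b = a
    · refine ⟨w * w, mul_mem hwR hwR, mul_ne_zero hw0 hw0, ?_⟩
      rw [order_mul hw0 hw0, order_sub_truncLT hzb, hb]
    · have hab : a - b ∈ S := by_contra fun h => hbS ((hsym b hb).2 h)
      have hX0 : single (a - b) (1 : K) ≠ 0 := single_ne_zero one_ne_zero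
      refine ⟨single (a - b) 1 * w, mul_mem (hDR (hahnSubring.single_mem hab 1)) hwR,
        mul_ne_zero hX0 hw0, ?_⟩
      rw [order_mul hX0 hw0, order_single one_ne_zero, order_sub_truncLT hzb, sub_add_cancel]
  rw [← hpa]
  exact hahnSubring.single_order_mem hDR hpR hp0 fun g hg =>
    AddSubmonoid.mem_of_lt_of_symmetric hS ha0 hsym (hpa ▸ hg)

/-- **Theorem 3.4, (2) ⇒ (1).**
Let `S` be a proper submonoid of the nonnegative cone of a totally ordered abelian group
`Γ` and `a ≥ 0` with `a ∉ S`.  Suppose that for every `g` with `2g ≠ a`, exactly one of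
`g ∈ S` and `a - g ∈ S` holds.  Then, assuming `D = [[K^S]]` has the same quotient field
as `V = [[K^{Γ≥0}]]`, the ring `D` is maximal with respect to excluding `X^a`: for every
element `z = f/g` of the quotient field of `D` with `z ∉ D`, one has `X^a ∈ D[z]`. -/
theorem hahnSubring_symmetry_maximal_excluding
    (S : AddSubmonoid Γ) (hS : S ≤ AddSubmonoid.nonneg Γ)
    (hproper : S ≠ AddSubmonoid.nonneg Γ)
    (a : Γ) (ha0 : 0 ≤ a) (haS : a ∉ S)
    (hsym : ∀ g : Γ, g + g ≠ a → (g ∈ S ↔ a - g ∉ S))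
    (hfrac : ∀ x : HahnSeries Γ K,
      (∃ f g : HahnSeries Γ K, f ∈ hahnSubring K (AddSubmonoid.nonneg Γ) ∧
          g ∈ hahnSubring K (AddSubmonoid.nonneg Γ) ∧ g ≠ 0 ∧ x = f / g) ↔
      (∃ f g : HahnSeries Γ K, f ∈ hahnSubring K S ∧ g ∈ hahnSubring K S ∧
          g ≠ 0 ∧ x = f / g)) :
    ∀ z : HahnSeries Γ K,
      (∃ f g : HahnSeries Γ K, f ∈ hahnSubring K S ∧ g ∈ hahnSubring K S ∧
          g ≠ 0 ∧ z = f / g) →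
      z ∉ hahnSubring K S →
      HahnSeries.single a (1 : K) ∈
        Subring.closure (insert z (hahnSubring K S : Set (HahnSeries Γ K))) :=
  hahnSubring_symmetry_maximal_excluding_general S hS a ha0 hsym
end

section
/- Let G be a subgroup of (ℝ,+), a > 0 a real number, and S = {0} ∪ {g ∈ G : a/2 < g < a} ∪ {g ∈ G : g > a}. Then S is a submonoid of G_{≥0}, and for every g ∈ G with 2g ≠ a, g ∈ S if and only if a − g ∉ S. -/
/-- **Example 3.5.**
Let `G` be a subgroup of `(ℝ, +)`, `a ∈ G` with `a > 0`, and
`S = {0} ∪ {g ∈ G : a/2 < g < a} ∪ {g ∈ G : g > a}`.  Then `S` is a submonoid of the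
nonnegative cone `G_{≥0}` (it contains `0`, is closed under addition, and consists of
nonnegative elements), and for every `g ∈ G` with `2g ≠ a`:
`g ∈ S` if and only if `a - g ∉ S`. -/
theorem real_subgroup_symmetric_submonoid
    (G : AddSubgroup ℝ) (a : ℝ) (ha : a ∈ G) (hapos : 0 < a) :
    let S : Set ℝ := {0} ∪ {g : ℝ | g ∈ G ∧ a / 2 < g ∧ g < a} ∪ {g : ℝ | g ∈ G ∧ a < g}
    ((0 : ℝ) ∈ S ∧ (∀ x ∈ S, ∀ y ∈ S, x + y ∈ S) ∧ (∀ x ∈ S, x ∈ G ∧ 0 ≤ x)) ∧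
      (∀ g : ℝ, g ∈ G → 2 * g ≠ a → (g ∈ S ↔ a - g ∉ S)) := by
  intro S
  have hmem : ∀ x : ℝ, x ∈ S ↔ x = 0 ∨ (x ∈ G ∧ a / 2 < x ∧ x < a) ∨ (x ∈ G ∧ a < x) := by
    intro x
    simp only [S, Set.mem_union, Set.mem_singleton_iff, Set.mem_setOf_eq, or_assoc]
  refine ⟨⟨?_, ?_, ?_⟩, ?_⟩
  · rw [hmem]; left; rfl
  · intro x hx y hy
    rw [hmem] at hx hy ⊢
    rcases hx with rfl | ⟨hxG, h1, h2⟩ | ⟨hxG, h1⟩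
    · simpa using hy
    · rcases hy with rfl | ⟨hyG, g1, g2⟩ | ⟨hyG, g1⟩
      · exact Or.inr (Or.inl ⟨by simpa using hxG, by linarith, by linarith⟩)
      · exact Or.inr (Or.inr ⟨G.add_mem hxG hyG, by linarith⟩)
      · exact Or.inr (Or.inr ⟨G.add_mem hxG hyG, by linarith⟩)
    · rcases hy with rfl | ⟨hyG, g1, g2⟩ | ⟨hyG, g1⟩
      · exact Or.inr (Or.inr ⟨by simpa using hxG, by linarith⟩)
      · exact Or.inr (Or.inr ⟨G.add_mem hxG hyG, by linarith⟩)
      · exact Or.inr (Or.inr ⟨G.add_mem hxG hyG, by linarith⟩)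
  · intro x hx
    rw [hmem] at hx
    rcases hx with rfl | ⟨hxG, h1, h2⟩ | ⟨hxG, h1⟩
    · exact ⟨G.zero_mem, le_refl 0⟩
    · exact ⟨hxG, by linarith⟩
    · exact ⟨hxG, by linarith⟩
  · intro g hg h2g
    have hag : a - g ∈ G := G.sub_mem ha hg
    rw [hmem, hmem]
    constructor
    · rintro (rfl | ⟨-, h1, h2⟩ | ⟨-, h1⟩) H
      · rcases H with h | ⟨-, h1, h2⟩ | ⟨-, h1⟩ <;> simp at * <;> linarith
      · rcases H with h | ⟨-, k1, k2⟩ | ⟨-, k1⟩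
        · rw [sub_eq_zero] at h; linarith
        · linarith
        · linarith
      · rcases H with h | ⟨-, k1, k2⟩ | ⟨-, k1⟩
        · rw [sub_eq_zero] at h; linarith
        · linarith
        · linarith
    · intro H
      rcases lt_trichotomy g 0 with h | h | h
      · exact absurd (Or.inr (Or.inr ⟨hag, by linarith⟩)) H
      · exact Or.inl h
      · rcases lt_trichotomy g a with h' | h' | h'
        · rcases lt_trichotomy g (a / 2) with hh | hh | hh
          · exact absurd (Or.inr (Or.inl ⟨hag, by linarith, by linarith⟩)) H
          · exact absurd (by linarith) h2g
          · exact Or.inr (Or.inl ⟨hg, hh, h'⟩)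
        · exact absurd (Or.inl (by rw [h']; ring)) H
        · exact Or.inr (Or.inr ⟨hg, h'⟩)
end

section
/- Let T be a local domain with maximal ideal m, κ = T/m, φ: T → κ the quotient map, B an integral domain with quotient field κ, and D = φ⁻¹(B) the pullback. If B is not maximal excluding (i.e., B can be written as the intersection of two proper overrings B_1, B_2), then D is not maximal excluding: D = φ⁻¹(B_1) ∩ φ⁻¹(B_2) is an intersection of two proper overrings of D. -/
/-- **Theorem 3.1 (easy direction): pullbacks of non-maximal-excluding rings.**
Let `T` be a local domain with maximal ideal `m`, residue field `κ = T/m` and quotient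
map `φ : T → κ`, and let `B` be an integral domain with quotient field `κ`.  If `B` is
not maximal excluding, i.e. `B = B₁ ∩ B₂` for two proper overrings `B₁, B₂ ⊆ κ` of `B`,
then the pullback `D = φ⁻¹(B)` is the intersection of the two proper overrings
`φ⁻¹(B₁)` and `φ⁻¹(B₂)`, so `D` is not maximal excluding either. -/
theorem pullback_not_maximal_excluding
    {T : Type*} [CommRing T] [IsDomain T] [IsLocalRing T]
    (B B₁ B₂ : Subring (IsLocalRing.ResidueField T))
    (hfrac : ∀ x : IsLocalRing.ResidueField T,
      ∃ a ∈ B, ∃ b ∈ B, b ≠ 0 ∧ x = a / b)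
    (h1 : B ≤ B₁) (h2 : B ≤ B₂) (hne1 : B₁ ≠ B) (hne2 : B₂ ≠ B)
    (hint : B₁ ⊓ B₂ = B) :
    (B₁.comap (IsLocalRing.residue T)) ⊓ (B₂.comap (IsLocalRing.residue T)) =
        B.comap (IsLocalRing.residue T) ∧
      B₁.comap (IsLocalRing.residue T) ≠ B.comap (IsLocalRing.residue T) ∧
      B₂.comap (IsLocalRing.residue T) ≠ B.comap (IsLocalRing.residue T) := by
  have hsurj : Function.Surjective (IsLocalRing.residue T) :=
    Ideal.Quotient.mk_surjective
  have hinj : ∀ C C' : Subring (IsLocalRing.ResidueField T),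
      C.comap (IsLocalRing.residue T) = C'.comap (IsLocalRing.residue T) → C = C' := by
    intro C C' h
    ext y
    obtain ⟨x, rfl⟩ := hsurj y
    constructor
    · intro hx
      have : x ∈ C.comap (IsLocalRing.residue T) := hx
      rw [h] at this; exact this
    · intro hx
      have : x ∈ C'.comap (IsLocalRing.residue T) := hx
      rw [← h] at this; exact this
  refine ⟨?_, fun h => hne1 (hinj _ _ h), fun h => hne2 (hinj _ _ h)⟩
  rw [← hint]
  ext x
  simp [Subring.mem_comap]
end

section
/- Let T be a local domain with maximal ideal m and residue field κ = T/m, φ: T → κ the quotient map, and B ⊆ κ an integral domain with quotient field κ which is maximal with respect to excluding an element α' ∈ κ \ B. Assume T is a valuation domain. Then D = φ⁻¹(B) is maximal with respect to excluding any lift α ∈ T of α' (φ(α) = α'): for every z ∈ Q(D) \ D, one has α ∈ D[z]. -/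
/-- **Theorem 3.1 (main direction): pullbacks over valuation rings are maximal excluding.**
Let `T` be a valuation domain (realized as a valuation subring of a field `F`), with
residue field `κ` and quotient map `φ : T → κ`.  Let `B ⊆ κ` be an integral domain with
quotient field `κ` which is maximal with respect to excluding some `α' ∈ κ \ B`, and let
`α ∈ T` be a lift of `α'`.  Then the pullback `D = φ⁻¹(B)` (viewed as a subring of
`F = Q(D)`) is maximal with respect to excluding `α`: for every `z ∈ F` with `z ∉ D`,
one has `α ∈ D[z]`. -/
theorem pullback_over_valuation_maximal_excluding
    {F : Type*} [Field F] (T : ValuationSubring F)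
    (B : Subring (IsLocalRing.ResidueField T))
    (hfrac : ∀ x : IsLocalRing.ResidueField T, ∃ a ∈ B, ∃ b ∈ B, b ≠ 0 ∧ x = a / b)
    (α' : IsLocalRing.ResidueField T) (hα' : α' ∉ B)
    (hBmax : ∀ z : IsLocalRing.ResidueField T, z ∉ B →
      α' ∈ Subring.closure (insert z (B : Set (IsLocalRing.ResidueField T))))
    (α : T) (hα : IsLocalRing.residue T α = α') :
    ∀ z : F, z ∉ (B.comap (IsLocalRing.residue T)).map T.subtype →
      (α : F) ∈ Subring.closure
        (insert z ((B.comap (IsLocalRing.residue T)).map T.subtype : Set F)) := by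
  intro z hz
  set D' := B.comap (IsLocalRing.residue T) with hD'
  -- maximal ideal is contained in D'
  have hmD : ∀ t : T, t ∈ IsLocalRing.maximalIdeal T → t ∈ D' := by
    intro t ht
    show IsLocalRing.residue T t ∈ B
    have : IsLocalRing.residue T t = 0 := (IsLocalRing.residue_eq_zero_iff _).mpr ht
    rw [this]; exact B.zero_mem
  have hDsub : (D'.map T.subtype : Set F) ⊆
      Subring.closure (insert z (D'.map T.subtype : Set F)) :=
    fun x hx => Subring.subset_closure (Set.mem_insert_of_mem _ hx)
  have hzmem : z ∈ Subring.closure (insert z (D'.map T.subtype : Set F)) :=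
    Subring.subset_closure (Set.mem_insert _ _)
  by_cases hzT : z ∈ T
  · -- z ∈ T but residue z ∉ B
    have hres : IsLocalRing.residue T ⟨z, hzT⟩ ∉ B := by
      intro h
      exact hz ⟨⟨z, hzT⟩, h, rfl⟩
    have hmax := hBmax _ hres
    have hmap : Subring.closure (insert (IsLocalRing.residue T ⟨z, hzT⟩) (B : Set _)) =
        (Subring.closure (insert (⟨z, hzT⟩ : T) (D' : Set T))).map (IsLocalRing.residue T) := by
      rw [RingHom.map_closure, Set.image_insert_eq]
      congr 2
      have : D'.map (IsLocalRing.residue T) = B :=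
        Subring.map_comap_eq_self_of_surjective IsLocalRing.residue_surjective B
      calc (B : Set _) = (D'.map (IsLocalRing.residue T) : Set _) := by rw [this]
        _ = IsLocalRing.residue T '' D' := rfl
    rw [hmap] at hmax
    obtain ⟨p, hp, hpe⟩ := hmax
    -- α - p ∈ maximal ideal
    have hdiff : α - p ∈ Subring.closure (insert (⟨z, hzT⟩ : T) (D' : Set T)) := by
      apply Subring.subset_closure
      apply Set.mem_insert_of_mem
      apply hmD
      exact (IsLocalRing.residue_eq_zero_iff _).mp (by rw [map_sub, hα, hpe, sub_self])
    have hαmem : α ∈ Subring.closure (insert (⟨z, hzT⟩ : T) (D' : Set T)) := by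
      have := Subring.add_mem _ hp hdiff
      simpa using this
    -- push through T.subtype
    have : (α : F) ∈ (Subring.closure (insert (⟨z, hzT⟩ : T) (D' : Set T))).map T.subtype :=
      ⟨α, hαmem, rfl⟩
    rw [RingHom.map_closure, Set.image_insert_eq, ← Subring.coe_map] at this
    exact this
  · -- z ∉ T, so z⁻¹ ∈ maximal ideal
    have hz0 : z ≠ 0 := by
      rintro rfl; exact hzT T.zero_mem
    have hinv : z⁻¹ ∈ T := (T.mem_or_inv_mem z).resolve_left hzT
    have hinvm : (⟨z⁻¹, hinv⟩ : T) ∈ IsLocalRing.maximalIdeal T := by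
      rw [IsLocalRing.mem_maximalIdeal, mem_nonunits_iff]
      rintro ⟨u, hu⟩
      apply hzT
      have h1 : ((u : T) : F) * (((u⁻¹ : Tˣ) : T) : F) = 1 := by
        rw [← Subring.coe_mul]
        norm_cast
        simp
      rw [hu] at h1
      have h2 : (((u⁻¹ : Tˣ) : T) : F) = z := by
        have h1' : z⁻¹ * (((u⁻¹ : Tˣ) : T) : F) = 1 := h1
        have := eq_inv_of_mul_eq_one_left h1'
        exact (inv_injective this).symm
      rw [← h2]
      exact ((u⁻¹ : Tˣ) : T).2
    have hd : α * ⟨z⁻¹, hinv⟩ ∈ D' := hmD _ (Ideal.mul_mem_left _ _ hinvm)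
    have hdF : ((α * ⟨z⁻¹, hinv⟩ : T) : F) ∈
        Subring.closure (insert z ((D'.map T.subtype : Subring F) : Set F)) :=
      hDsub ⟨_, hd, rfl⟩
    have : (α : F) = z * ((α * ⟨z⁻¹, hinv⟩ : T) : F) := by
      push_cast
      field_simp
    rw [this]
    exact Subring.mul_mem _ hzmem hdF
end

section
/- Let D be a local integral domain, Q a prime ideal of D such that Q = Q·D_Q and D/Q is a valuation domain, and let A = D_Q. Then there is no element z ∈ A with z ∉ D and z⁻¹ ∉ D. Conversely, if A is an overring of a local domain D such that no z ∈ A satisfies z, z⁻¹ ∉ D, and A ≠ D is a ring, then A is local, its maximal ideal is a prime ideal Q of D with Q = Q·D_Q, A = D_Q, and D/Q is a valuation domain. -/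
/-!
Suppose every element of the overring `A` outside `D` has its inverse in `D`. Then a nonunit `x`
of `A` lies in `D`, since otherwise `x⁻¹ ∈ D ⊆ A`. If `a, b` are nonunits of `A` with `a + b`
a unit, then `a / (a + b)` and `b / (a + b)` are nonunits of `A`, hence elements of `D` summing
to `1`, which contradicts the locality of `D`; so `A` is local. Its maximal ideal contracts to
`Q = m_A ∩ D`, whose complement in `D` consists of the elements invertible in `A`. Every `z ∈ A`
is `z / 1` or `1 / z⁻¹` with `z⁻¹ ∈ D \ Q`, so `A = D_Q`; also `Q · D_Q ⊆ m_A ⊆ D`, and for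
`u, v ∉ Q` the quotient `u / v` lies in `A`, hence `u / v ∈ D` or `v / u ∈ D`.

In the other direction, `a / s` with `s ∉ Q` lies in `D` if `a ∈ Q` because `Q` is divided,
and otherwise the valuation condition applies to `a` and `s`.
-/

open IsLocalRing

theorem Subring.isLocalRing_of_forall_not_isUnit_mem {R : Type*} [CommRing R] {D A : Subring R}
    [IsLocalRing D] (hDA : D ≤ A) (h : ∀ x : A, ¬IsUnit x → (x : R) ∈ D) : IsLocalRing A := by
  have : Nontrivial R := D.subtype_injective.nontrivial
  refine of_isUnit_or_isUnit_of_isUnit_add fun a b hab => ?_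
  by_contra! hn
  obtain ⟨w, hw⟩ := hab.exists_right_inv
  have haw : ¬IsUnit (a * w) := fun hu => hn.1 (isUnit_of_mul_isUnit_left hu)
  have hbw : ¬IsUnit (b * w) := fun hu => hn.2 (isUnit_of_mul_isUnit_left hu)
  have hsum : (⟨_, h _ haw⟩ + ⟨_, h _ hbw⟩ : D) = 1 :=
    Subtype.ext (by simpa [add_mul] using congrArg Subtype.val hw)
  rcases isUnit_or_isUnit_of_add_one hsum with hu | hu
  · exact haw (hu.map (Subring.inclusion hDA))
  · exact hbw (hu.map (Subring.inclusion hDA))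

theorem Subring.div_mem_or_inv_div_mem {K : Type*} [Field K] {D : Subring K} {Q : Ideal D}
    (hdiv : ∀ a s : D, a ∈ Q → s ∉ Q → ∃ q : D, q ∈ Q ∧ (a : K) / s = q)
    (hval : ∀ u v : D, u ∉ Q → v ∉ Q → (u : K) / v ∈ D ∨ (v : K) / u ∈ D)
    (a : D) {s : D} (hs : s ∉ Q) : (a : K) / s ∈ D ∨ ((a : K) / s)⁻¹ ∈ D := by
  by_cases ha : a ∈ Q
  · obtain ⟨q, -, hq⟩ := hdiv a s ha hs
    exact .inl (hq ▸ q.2)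
  · simpa only [inv_div] using hval a s ha hs

namespace Subring

variable {K : Type*} [Field K] {D A : Subring K}

theorem mem_of_not_isUnit_of_forall_mem_or_inv_mem (hDA : D ≤ A)
    (hA : ∀ z ∈ A, z ∈ D ∨ z⁻¹ ∈ D) (x : A) (hx : ¬IsUnit x) : (x : K) ∈ D := by
  by_contra hxD
  have hx0 : (x : K) ≠ 0 := fun h => hxD (h ▸ D.zero_mem)
  exact hx (Submonoid.isUnit_iff_and.2 ⟨hx0, hDA ((hA x x.2).resolve_left hxD)⟩)

theorem notMem_comap_maximalIdeal_iff [IsLocalRing A] (hDA : D ≤ A) (d : D) :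
    d ∉ (maximalIdeal A).comap (inclusion hDA) ↔ (d : K) ≠ 0 ∧ (d : K)⁻¹ ∈ A := by
  rw [Ideal.mem_comap, mem_maximalIdeal, mem_nonunits_iff, not_not]
  exact Submonoid.isUnit_iff_and

theorem div_mem_of_notMem_comap_maximalIdeal [IsLocalRing A] (hDA : D ≤ A) (a : D) {s : D}
    (hs : s ∉ (maximalIdeal A).comap (inclusion hDA)) : (a : K) / s ∈ A := by
  rw [div_eq_mul_inv]
  exact A.mul_mem (hDA a.2) ((notMem_comap_maximalIdeal_iff hDA s).1 hs).2

variable [IsLocalRing A] (hDA : D ≤ A)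

theorem coe_eq_setOf_div_of_forall_mem_or_inv_mem
    (hA : ∀ z ∈ A, z ∈ D ∨ z⁻¹ ∈ D) :
    (A : Set K) =
      {x | ∃ a s : D, s ∉ (maximalIdeal A).comap (inclusion hDA) ∧ x = (a : K) / s} := by
  ext z
  refine ⟨fun hz => ?_, ?_⟩
  · by_cases hzD : z ∈ D
    · refine ⟨⟨z, hzD⟩, 1, ?_, (div_one z).symm⟩
      exact (notMem_comap_maximalIdeal_iff hDA 1).2 ⟨one_ne_zero, by simp⟩
    · have hz0 : z ≠ 0 := fun h => hzD (h ▸ D.zero_mem)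
      refine ⟨1, ⟨z⁻¹, (hA z hz).resolve_left hzD⟩, ?_, by simp⟩
      exact (notMem_comap_maximalIdeal_iff hDA _).2 ⟨inv_ne_zero hz0, by simpa using hz⟩
  · rintro ⟨a, s, hs, rfl⟩
    exact div_mem_of_notMem_comap_maximalIdeal hDA a hs

theorem not_isUnit_iff_of_forall_mem_or_inv_mem
    (hA : ∀ z ∈ A, z ∈ D ∨ z⁻¹ ∈ D) (x : A) :
    ¬IsUnit x ↔ ∃ hx : (x : K) ∈ D, (⟨x, hx⟩ : D) ∈ (maximalIdeal A).comap (inclusion hDA) :=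
  ⟨fun hu => ⟨mem_of_not_isUnit_of_forall_mem_or_inv_mem hDA hA x hu, hu⟩, fun ⟨_, hx⟩ => hx⟩

theorem exists_mem_comap_maximalIdeal_div_eq_of_forall_mem_or_inv_mem
    (hA : ∀ z ∈ A, z ∈ D ∨ z⁻¹ ∈ D) (a s : D)
    (ha : a ∈ (maximalIdeal A).comap (inclusion hDA))
    (hs : s ∉ (maximalIdeal A).comap (inclusion hDA)) :
    ∃ q : D, q ∈ (maximalIdeal A).comap (inclusion hDA) ∧ (a : K) / s = q := by
  obtain ⟨-, hsA⟩ := (notMem_comap_maximalIdeal_iff hDA s).1 hs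
  set x : A := inclusion hDA a * ⟨(s : K)⁻¹, hsA⟩
  have hx : ¬IsUnit x := fun hu => ha (isUnit_of_mul_isUnit_left hu)
  exact ⟨⟨x, mem_of_not_isUnit_of_forall_mem_or_inv_mem hDA hA x hx⟩, hx, div_eq_mul_inv _ _⟩

theorem div_mem_or_div_mem_of_forall_mem_or_inv_mem
    (hA : ∀ z ∈ A, z ∈ D ∨ z⁻¹ ∈ D) (u : D) {v : D}
    (hv : v ∉ (maximalIdeal A).comap (inclusion hDA)) : (u : K) / v ∈ D ∨ (v : K) / u ∈ D := by
  simpa only [inv_div] using hA _ (div_mem_of_notMem_comap_maximalIdeal hDA u hv)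

end Subring

theorem overring_with_no_doubly_external_element_general
    {K : Type*} [Field K] (D : Subring K) [IsLocalRing D] :
    (∀ Q : Ideal D, Q.IsPrime →
      (∀ a s : D, a ∈ Q → s ∉ Q → ∃ q : D, q ∈ Q ∧ (a : K) / (s : K) = q) →
      (∀ u v : D, u ∉ Q → v ∉ Q → ((u : K) / (v : K) ∈ D ∨ (v : K) / (u : K) ∈ D)) →
      ¬ ∃ z : K, (∃ a s : D, s ∉ Q ∧ z = (a : K) / (s : K)) ∧ z ∉ D ∧ z⁻¹ ∉ D) ∧
    (∀ A : Subring K, D ≤ A → A ≠ D →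
      (∀ z ∈ A, ¬(z ∉ D ∧ z⁻¹ ∉ D)) →
      IsLocalRing A ∧
        ∃ Q : Ideal D, Q.IsPrime ∧
          ((A : Set K) = {x : K | ∃ a s : D, s ∉ Q ∧ x = (a : K) / (s : K)}) ∧
          (∀ x : K, (hx : x ∈ A) → (¬ IsUnit (⟨x, hx⟩ : A) ↔
            ∃ hq : x ∈ D, (⟨x, hq⟩ : D) ∈ Q)) ∧
          (∀ a s : D, a ∈ Q → s ∉ Q → ∃ q : D, q ∈ Q ∧ (a : K) / (s : K) = q) ∧
          (∀ u v : D, u ∉ Q → v ∉ Q →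
            ((u : K) / (v : K) ∈ D ∨ (v : K) / (u : K) ∈ D))) := by
  refine ⟨fun Q _ hdiv hval => ?_, fun A hDA _ hcomp => ?_⟩
  · rintro ⟨z, ⟨a, s, hs, rfl⟩, hzD, hzD'⟩
    exact (Subring.div_mem_or_inv_div_mem hdiv hval a hs).elim hzD hzD'
  · have hA : ∀ z ∈ A, z ∈ D ∨ z⁻¹ ∈ D := fun z hz => by
      simpa only [not_and_or, not_not] using hcomp z hz
    have : IsLocalRing A :=
      Subring.isLocalRing_of_forall_not_isUnit_mem hDA
        (Subring.mem_of_not_isUnit_of_forall_mem_or_inv_mem hDA hA)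
    exact ⟨this, _, Ideal.IsPrime.comap _,
      Subring.coe_eq_setOf_div_of_forall_mem_or_inv_mem hDA hA,
      fun x hx => Subring.not_isUnit_iff_of_forall_mem_or_inv_mem hDA hA ⟨x, hx⟩,
      Subring.exists_mem_comap_maximalIdeal_div_eq_of_forall_mem_or_inv_mem hDA hA,
      fun u v _ hv => Subring.div_mem_or_div_mem_of_forall_mem_or_inv_mem hDA hA u hv⟩

/-- **Remark 4.10.**
Let `D` be a local integral domain with quotient field `K`.
(1) If `Q` is a prime ideal of `D` with `Q = Q·D_Q` (every fraction `a/s` with `a ∈ Q`,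
`s ∉ Q` already lies in `Q`) and `D/Q` is a valuation domain (for `u, v ∉ Q`, `u/v ∈ D`
or `v/u ∈ D`), then no element `z` of `A = D_Q` satisfies both `z ∉ D` and `z⁻¹ ∉ D`.
(2) Conversely, if `A` is an overring of `D` with `A ≠ D` such that no `z ∈ A` has both
`z ∉ D` and `z⁻¹ ∉ D`, then `A` is local, its maximal ideal (set of nonunits) is a prime
ideal `Q` of `D` with `Q = Q·D_Q`, `A = D_Q`, and `D/Q` is a valuation domain. -/
theorem overring_with_no_doubly_external_element
    {K : Type*} [Field K] (D : Subring K) [IsLocalRing D]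
    (hfrac : ∀ x : K, ∃ a ∈ D, ∃ b ∈ D, b ≠ 0 ∧ x = a / b) :
    (∀ Q : Ideal D, Q.IsPrime →
      (∀ a s : D, a ∈ Q → s ∉ Q → ∃ q : D, q ∈ Q ∧ (a : K) / (s : K) = q) →
      (∀ u v : D, u ∉ Q → v ∉ Q → ((u : K) / (v : K) ∈ D ∨ (v : K) / (u : K) ∈ D)) →
      ¬ ∃ z : K, (∃ a s : D, s ∉ Q ∧ z = (a : K) / (s : K)) ∧ z ∉ D ∧ z⁻¹ ∉ D) ∧
    (∀ A : Subring K, D ≤ A → A ≠ D →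
      (∀ z ∈ A, ¬(z ∉ D ∧ z⁻¹ ∉ D)) →
      IsLocalRing A ∧
        ∃ Q : Ideal D, Q.IsPrime ∧
          ((A : Set K) = {x : K | ∃ a s : D, s ∉ Q ∧ x = (a : K) / (s : K)}) ∧
          (∀ x : K, (hx : x ∈ A) → (¬ IsUnit (⟨x, hx⟩ : A) ↔
            ∃ hq : x ∈ D, (⟨x, hq⟩ : D) ∈ Q)) ∧
          (∀ a s : D, a ∈ Q → s ∉ Q → ∃ q : D, q ∈ Q ∧ (a : K) / (s : K) = q) ∧
          (∀ u v : D, u ∉ Q → v ∉ Q →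
            ((u : K) / (v : K) ∈ D ∨ (v : K) / (u : K) ∈ D))) :=
  overring_with_no_doubly_external_element_general D
end
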